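/- arXiv:1701.01042 — 3 statements merged into one kernel-verified Lean document; each statement's English description precedes it below -/
import Mathlib

section
/- For any odd integer n ≥ 3 and real T > 1, the integral ∫₁^T F_n(u)/u du equals (n/π)·tan(π/n)·log T + O(1), where F_n(u) := cos(2π{u}/n) + tan(π/n)·sin(2π{u}/n) and {u} denotes the fractional part of u, with the implied constant absolute. -/
open Real

/-- `F_n(u) = cos(2π{u}/n) + tan(π/n)·sin(2π{u}/n)`, where `{u}` is the fractional part. -/
noncomputable def Fn (n : ℕ) (u : ℝ) : ℝ :=
  Real.cos (2 * π * Int.fract u / n) + Real.tan (π / n) * Real.sin (2 * π * Int.fract u / n)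

open MeasureTheory intervalIntegral Set

lemma Fn_measurable (n : ℕ) : Measurable (Fn n) := by
  have h : Measurable fun u : ℝ => 2 * π * Int.fract u / (n : ℝ) :=
    (measurable_fract.const_mul (2 * π)).div_const _
  exact h.cos.add (h.sin.const_mul _)

lemma tan_bound (n : ℕ) (hn : 3 ≤ n) :
    0 ≤ Real.tan (π / n) ∧ Real.tan (π / n) ≤ 2 := by
  have hπ := Real.pi_pos
  have hn0 : (3:ℝ) ≤ (n:ℝ) := by exact_mod_cast hn
  have h1 : π / n ≤ π / 3 := by
    apply div_le_div_of_nonneg_left hπ.le (by norm_num) hn0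
  have h2 : 0 < π / n := by positivity
  have hcos : (1:ℝ)/2 ≤ Real.cos (π / n) := by
    rw [← Real.cos_pi_div_three]
    exact Real.cos_le_cos_of_nonneg_of_le_pi h2.le (by linarith) h1
  have hsin1 : Real.sin (π/n) ≤ 1 := Real.sin_le_one _
  have hsin0 : 0 ≤ Real.sin (π/n) :=
    Real.sin_nonneg_of_nonneg_of_le_pi h2.le (by nlinarith)
  rw [Real.tan_eq_sin_div_cos]
  constructor
  · exact div_nonneg hsin0 (by linarith)
  · rw [div_le_iff₀ (by linarith)]; nlinarith

lemma Fn_abs_le (n : ℕ) (hn : 3 ≤ n) (u : ℝ) : |Fn n u| ≤ 3 := by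
  obtain ⟨ht0, ht2⟩ := tan_bound n hn
  have h1 := Real.abs_cos_le_one (2 * π * Int.fract u / n)
  have h2 := Real.abs_sin_le_one (2 * π * Int.fract u / n)
  calc |Fn n u| ≤ |Real.cos (2 * π * Int.fract u / n)|
      + |Real.tan (π / n) * Real.sin (2 * π * Int.fract u / n)| := abs_add_le _ _
    _ ≤ 1 + 2 * 1 := by
        refine add_le_add h1 ?_
        rw [abs_mul, abs_of_nonneg ht0]
        exact mul_le_mul ht2 h2 (abs_nonneg _) (by norm_num)
    _ = 3 := by norm_num

lemma Fn_mean (n : ℕ) (hn : 3 ≤ n) :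
    (∫ u in (0:ℝ)..1, Fn n u) = (n / π) * Real.tan (π / n) := by
  have hπ := Real.pi_pos
  have hn0 : (0:ℝ) < (n:ℝ) := by
    have : (3:ℝ) ≤ (n:ℝ) := by exact_mod_cast hn
    linarith
  set c : ℝ := 2 * π / n with hc
  have hc0 : c ≠ 0 := by positivity
  set t : ℝ := Real.tan (π / n) with ht
  -- step 1 : replace fract by identity a.e.
  have hcongr : (∫ u in (0:ℝ)..1, Fn n u)
      = ∫ u in (0:ℝ)..1, (Real.cos (c * u) + t * Real.sin (c * u)) := by
    apply intervalIntegral.integral_congr_ae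
    have hne : ∀ᵐ x : ℝ, x ≠ (1:ℝ) := by
      have h0 : (volume : Measure ℝ) {(1:ℝ)} = 0 := measure_singleton 1
      rw [MeasureTheory.ae_iff]
      convert h0 using 2
      ext x; simp
    filter_upwards [hne] with x hx hxI
    rw [Set.uIoc_of_le (by norm_num : (0:ℝ) ≤ 1)] at hxI
    have hfr : Int.fract x = x :=
      Int.fract_eq_self.mpr ⟨hxI.1.le, lt_of_le_of_ne hxI.2 hx⟩
    simp only [Fn, hfr]
    have harg : 2 * π * x / n = c * x := by rw [hc]; ring
    rw [harg, ht]
  rw [hcongr]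
  -- step 2 : FTC
  have hderiv : ∀ x ∈ Set.uIcc (0:ℝ) 1,
      HasDerivAt (fun u => (1/c) * Real.sin (c * u) - t * ((1/c) * Real.cos (c * u)))
        (Real.cos (c * x) + t * Real.sin (c * x)) x := by
    intro x _
    have hid : HasDerivAt (fun u : ℝ => c * u) c x := by
      simpa using (hasDerivAt_id x).const_mul c
    have hs : HasDerivAt (fun u => Real.sin (c * u)) (Real.cos (c * x) * c) x :=
      (Real.hasDerivAt_sin (c * x)).comp x hid
    have hcs : HasDerivAt (fun u => Real.cos (c * u)) (-Real.sin (c * x) * c) x :=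
      (Real.hasDerivAt_cos (c * x)).comp x hid
    have := (hs.const_mul (1/c)).sub ((hcs.const_mul (1/c)).const_mul t)
    convert this using 1
    · rfl
    · rfl
    · rfl
    have h1 : 1 / c * c = 1 := one_div_mul_cancel hc0
    linear_combination (-(Real.cos (c * x) + t * Real.sin (c * x))) * h1
  have hint : IntervalIntegrable (fun u => Real.cos (c * u) + t * Real.sin (c * u))
      volume 0 1 := by
    exact ((Real.continuous_cos.comp (continuous_const.mul continuous_id)).add
      (continuous_const.mul (Real.continuous_sin.comp (continuous_const.mul continuous_id)))).intervalIntegrable _ _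
  rw [intervalIntegral.integral_eq_sub_of_hasDerivAt hderiv hint]
  -- step 3 : trig computation
  have hcosne : Real.cos (π / n) ≠ 0 := by
    have h1 : π / n ≤ π / 3 := by
      apply div_le_div_of_nonneg_left hπ.le (by norm_num) (by exact_mod_cast hn)
    have h2 : 0 < π / n := by positivity
    have : (1:ℝ)/2 ≤ Real.cos (π / n) := by
      rw [← Real.cos_pi_div_three]
      exact Real.cos_le_cos_of_nonneg_of_le_pi h2.le (by linarith) h1
    linarith
  have hc2 : c = 2 * (π / n) := by rw [hc]; ring
  have hsin2 : Real.sin c = 2 * Real.sin (π/n) * Real.cos (π/n) := by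
    rw [hc2, Real.sin_two_mul]
  have hcos2 : Real.cos c = 2 * Real.cos (π/n) ^ 2 - 1 := by
    rw [hc2, Real.cos_two_mul]
  have key : Real.sin c = t + t * Real.cos c := by
    rw [hsin2, hcos2, ht, Real.tan_eq_sin_div_cos]
    field_simp
    ring
  simp only [mul_one, mul_zero, Real.sin_zero, Real.cos_zero]
  rw [key, hc]
  field_simp
  ring


lemma Fn_interval_mean (n : ℕ) (hn : 3 ≤ n) (m : ℕ) :
    (∫ u in (m:ℝ)..((m:ℝ)+1), Fn n u) = (n / π) * Real.tan (π / n) := by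
  have h := intervalIntegral.integral_comp_add_right (a := (0:ℝ)) (b := 1) (Fn n) (m:ℝ)
  have heq : ∀ x : ℝ, Fn n (x + (m:ℝ)) = Fn n x := by
    intro x; simp [Fn, Int.fract_add_natCast]
  simp only [heq, zero_add] at h
  rw [add_comm (m:ℝ) 1, ← h, Fn_mean n hn]

lemma M_abs_le (n : ℕ) (hn : 3 ≤ n) : |(n / π) * Real.tan (π / n)| ≤ 3 := by
  rw [← Fn_mean n hn]
  have := intervalIntegral.norm_integral_le_of_norm_le_const (C := 3) (a := (0:ℝ)) (b := 1)
    (f := Fn n) (fun x _ => by simpa [Real.norm_eq_abs] using Fn_abs_le n hn x)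
  simpa [Real.norm_eq_abs] using this

lemma H_ptwise (n : ℕ) (hn : 3 ≤ n) (M : ℝ) (hM : |M| ≤ 3) (u : ℝ) :
    |Fn n u - M| ≤ 6 := by
  have h1 := Fn_abs_le n hn u
  have h2 : |Fn n u - M| ≤ |Fn n u| + |M| := abs_sub _ _
  linarith

lemma H_intInt (n : ℕ) (hn : 3 ≤ n) (M : ℝ) (hM : |M| ≤ 3) (g : ℝ → ℝ)
    (hg : Measurable g) (c : ℝ) (a b : ℝ)
    (hb : ∀ u ∈ Set.uIoc a b, |g u| ≤ c) :
    IntervalIntegrable (fun u => (Fn n u - M) * g u) volume a b := by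
  apply IntervalIntegrable.mono_fun' (g := fun _ => 6 * c) (intervalIntegrable_const)
  · exact (((Fn_measurable n).sub measurable_const).mul hg).aestronglyMeasurable.restrict
  · filter_upwards [MeasureTheory.ae_restrict_mem measurableSet_uIoc] with x hx
    rw [Real.norm_eq_abs, abs_mul]
    exact mul_le_mul (H_ptwise n hn M hM x) (hb x hx) (abs_nonneg _) (by norm_num)

lemma H_bound (n : ℕ) (hn : 3 ≤ n) (M : ℝ) (hM : |M| ≤ 3) (g : ℝ → ℝ) (c : ℝ)
    (a b : ℝ) (hb : ∀ u ∈ Set.uIoc a b, |g u| ≤ c) :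
    |∫ u in a..b, (Fn n u - M) * g u| ≤ 6 * c * |b - a| := by
  have h := intervalIntegral.norm_integral_le_of_norm_le_const (C := 6 * c)
    (f := fun u => (Fn n u - M) * g u) (a := a) (b := b) ?_
  · simpa [Real.norm_eq_abs] using h
  · intro x hx
    rw [Real.norm_eq_abs, abs_mul]
    exact mul_le_mul (H_ptwise n hn M hM x) (hb x hx) (abs_nonneg _) (by norm_num)

/-- For odd `n ≥ 3` and `T > 1`, `∫₁^T F_n(u)/u du = (n/π)·tan(π/n)·log T + O(1)`,
with an absolute implied constant. -/
theorem stmt_0 :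
    ∃ C : ℝ, 0 < C ∧ ∀ n : ℕ, 3 ≤ n → Odd n → ∀ T : ℝ, 1 < T →
      |(∫ u in (1:ℝ)..T, Fn n u / u) - (n / π) * Real.tan (π / n) * Real.log T| ≤ C := by
  refine ⟨13, by norm_num, ?_⟩
  intro n hn _ T hT
  have hπ := Real.pi_pos
  set M := (↑n / π) * Real.tan (π / n) with hMdef
  have hM : |M| ≤ 3 := M_abs_le n hn
  have hg1 : Measurable (fun u : ℝ => 1 / u) := measurable_const.div measurable_id
  have hbound1 : ∀ a b : ℝ, 1 ≤ a → 1 ≤ b → ∀ u ∈ Set.uIoc a b, |1/u| ≤ 1 := by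
    intro a b ha hb u hu
    have h1u : (1:ℝ) ≤ u := le_trans (le_min ha hb) hu.1.le
    have hu0 : (0:ℝ) < u := by linarith
    rw [abs_of_nonneg (by positivity), div_le_one hu0]
    exact h1u
  have h0 : (0:ℝ) ∉ Set.uIcc (1:ℝ) T := by
    rw [Set.uIcc_of_le (by linarith : (1:ℝ) ≤ T)]
    intro h; exact absurd h.1 (by norm_num)
  have hlogint : M * Real.log T = ∫ u in (1:ℝ)..T, M * (1/u) := by
    rw [intervalIntegral.integral_const_mul, integral_one_div h0, div_one]
  have hFnint : IntervalIntegrable (fun u => Fn n u / u) volume 1 T := by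
    have h := H_intInt n hn 0 (by norm_num) (fun u => 1/u) hg1 1 1 T
      (hbound1 1 T le_rfl (by linarith))
    simpa [sub_zero, mul_one_div, div_eq_mul_inv] using h
  have hMint : IntervalIntegrable (fun u => M * (1/u)) volume 1 T := by
    apply ContinuousOn.intervalIntegrable
    apply ContinuousOn.mul continuousOn_const
    apply ContinuousOn.div continuousOn_const continuousOn_id
    intro x hx
    rw [Set.uIcc_of_le (by linarith : (1:ℝ) ≤ T)] at hx
    have : (1:ℝ) ≤ x := hx.1
    simp only [id_eq]
    linarith
  have hkey : (∫ u in (1:ℝ)..T, Fn n u / u) - M * Real.log T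
      = ∫ u in (1:ℝ)..T, (Fn n u - M) * (1/u) := by
    rw [hlogint, ← intervalIntegral.integral_sub hFnint hMint]
    apply intervalIntegral.integral_congr
    intro x _
    ring
  rw [hkey]
  set N := Nat.floor T with hNdef
  have hN1 : 1 ≤ N := Nat.le_floor (by exact_mod_cast hT.le)
  have hNR : (1:ℝ) ≤ (N:ℝ) := by exact_mod_cast hN1
  have hNT : (N:ℝ) ≤ T := Nat.floor_le (by linarith)
  have hTN : T < (N:ℝ) + 1 := Nat.lt_floor_add_one T
  have hi1 : IntervalIntegrable (fun u => (Fn n u - M) * (1/u)) volume 1 (N:ℝ) :=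
    H_intInt n hn M hM _ hg1 1 1 (N:ℝ) (hbound1 1 (N:ℝ) le_rfl hNR)
  have hi2 : IntervalIntegrable (fun u => (Fn n u - M) * (1/u)) volume (N:ℝ) T :=
    H_intInt n hn M hM _ hg1 1 (N:ℝ) T (hbound1 (N:ℝ) T hNR (by linarith))
  have hsplit : (∫ u in (1:ℝ)..T, (Fn n u - M) * (1/u))
      = (∫ u in (1:ℝ)..(N:ℝ), (Fn n u - M) * (1/u))
        + ∫ u in (N:ℝ)..T, (Fn n u - M) * (1/u) :=
    (intervalIntegral.integral_add_adjacent_intervals hi1 hi2).symm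
  have htail : |∫ u in (N:ℝ)..T, (Fn n u - M) * (1/u)| ≤ 6 := by
    have h := H_bound n hn M hM (fun u => 1/u) 1 (N:ℝ) T (hbound1 (N:ℝ) T hNR (by linarith))
    have habs : |T - (N:ℝ)| ≤ 1 := by
      rw [abs_of_nonneg (by linarith)]; linarith
    calc |∫ u in (N:ℝ)..T, (Fn n u - M) * (1/u)| ≤ 6 * 1 * |T - (N:ℝ)| := h
      _ ≤ 6 := by linarith
  -- head bound via sum over unit intervals
  have hintk : ∀ k, k < N - 1 → IntervalIntegrable (fun u => (Fn n u - M) * (1/u))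
      volume ((k:ℝ)+1) (((k+1:ℕ):ℝ)+1) := by
    intro k _
    apply H_intInt n hn M hM _ hg1 1
    have hk0 : (0:ℝ) ≤ (k:ℝ) := Nat.cast_nonneg k
    apply hbound1
    · linarith
    · push_cast; linarith
  have hsum := intervalIntegral.sum_integral_adjacent_intervals
    (a := fun k : ℕ => (k:ℝ)+1) (μ := volume) (n := N - 1) hintk
  have hend : ((N - 1 : ℕ):ℝ) + 1 = (N:ℝ) := by
    push_cast [Nat.cast_sub hN1]; ring
  simp only [Nat.cast_zero, zero_add] at hsum
  rw [hend] at hsum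
  have hterm : ∀ k ∈ Finset.range (N - 1),
      |∫ u in ((k:ℝ)+1)..(((k+1:ℕ):ℝ)+1), (Fn n u - M) * (1/u)|
        ≤ 6/((k:ℝ)+1) - 6/(((k+1:ℕ):ℝ)+1) := by
    intro k _
    set m : ℝ := (k:ℝ)+1 with hm
    have hm1 : (1:ℝ) ≤ m := by
      have : (0:ℝ) ≤ (k:ℝ) := Nat.cast_nonneg k
      linarith
    have hm0 : (0:ℝ) < m := by linarith
    have hep : ((k+1:ℕ):ℝ)+1 = m + 1 := by push_cast; ring
    rw [hep]
    -- zero mean of Fn - M over [m, m+1]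
    have hFnInt : IntervalIntegrable (fun u => Fn n u) volume m (m+1) := by
      have h := H_intInt n hn 0 (by norm_num) (fun _ => (1:ℝ)) measurable_const 1 m (m+1)
        (fun u _ => by norm_num)
      simpa using h
    have hmean : (∫ u in m..(m+1), (Fn n u - M)) = 0 := by
      rw [intervalIntegral.integral_sub hFnInt intervalIntegrable_const,
        intervalIntegral.integral_const]
      have hmm : ((k+1:ℕ):ℝ) = m := by push_cast; ring
      have h2 := Fn_interval_mean n hn (k+1)
      rw [hmm] at h2
      rw [h2]
      have h1 : m + 1 - m = (1:ℝ) := by ring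
      rw [h1, one_smul, hMdef, sub_self]
    have hzero : (∫ u in m..(m+1), (Fn n u - M) * (1/m)) = 0 := by
      rw [intervalIntegral.integral_mul_const, hmean, zero_mul]
    have hconst : IntervalIntegrable (fun u => (Fn n u - M) * (1/m)) volume m (m+1) :=
      H_intInt n hn M hM _ measurable_const (|1/m|) m (m+1) (fun u _ => le_refl _)
    have hgm : Measurable (fun u : ℝ => 1/u - 1/m) := hg1.sub measurable_const
    have hib : IntervalIntegrable (fun u => (Fn n u - M) * (1/u - 1/m)) volume m (m+1) := by
      apply H_intInt n hn M hM _ hgm 2 m (m+1)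
      intro u hu
      rw [Set.uIoc_of_le (by linarith : m ≤ m+1)] at hu
      have hu1 : (1:ℝ) ≤ u := le_trans hm1 hu.1.le
      have ha1 : |1/u| ≤ 1 := by
        rw [abs_of_nonneg (by positivity), div_le_one (by linarith)]; exact hu1
      have ha2 : |1/m| ≤ 1 := by
        rw [abs_of_nonneg (by positivity), div_le_one hm0]; exact hm1
      calc |1/u - 1/m| ≤ |1/u| + |1/m| := abs_sub _ _
        _ ≤ 2 := by linarith
    have hdecomp : (∫ u in m..(m+1), (Fn n u - M) * (1/u))
        = ∫ u in m..(m+1), (Fn n u - M) * (1/u - 1/m) := by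
      have hadd : (∫ u in m..(m+1), (Fn n u - M) * (1/u))
          = (∫ u in m..(m+1), (Fn n u - M) * (1/u - 1/m))
            + ∫ u in m..(m+1), (Fn n u - M) * (1/m) := by
        rw [← intervalIntegral.integral_add hib hconst]
        apply intervalIntegral.integral_congr
        intro x _; ring
      rw [hadd, hzero, add_zero]
    rw [hdecomp]
    have hb2 : ∀ u ∈ Set.uIoc m (m+1), |1/u - 1/m| ≤ 1/m - 1/(m+1) := by
      intro u hu
      rw [Set.uIoc_of_le (by linarith : m ≤ m+1)] at hu
      have hu0 : (0:ℝ) < u := lt_trans hm0 hu.1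
      have h1 : 1/u ≤ 1/m := one_div_le_one_div_of_le hm0 hu.1.le
      have h2 : 1/(m+1) ≤ 1/u := one_div_le_one_div_of_le hu0 hu.2
      rw [abs_of_nonpos (by linarith)]
      linarith
    have hfin := H_bound n hn M hM (fun u => 1/u - 1/m) (1/m - 1/(m+1)) m (m+1) hb2
    have habs1 : |m + 1 - m| = (1:ℝ) := by rw [show m+1-m = (1:ℝ) by ring, abs_one]
    rw [habs1, mul_one] at hfin
    calc |∫ u in m..(m+1), (Fn n u - M) * (1/u - 1/m)| ≤ 6 * (1/m - 1/(m+1)) := hfin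
      _ = 6/m - 6/(m+1) := by ring
  have hheadsum : |∫ u in (1:ℝ)..(N:ℝ), (Fn n u - M) * (1/u)| ≤ 6 := by
    rw [← hsum]
    have hstep := Finset.sum_range_sub' (f := fun k : ℕ => 6/((k:ℝ)+1)) (n := N-1)
    calc |∑ k ∈ Finset.range (N-1),
          ∫ u in ((k:ℝ)+1)..(((k+1:ℕ):ℝ)+1), (Fn n u - M) * (1/u)|
        ≤ ∑ k ∈ Finset.range (N-1),
          |∫ u in ((k:ℝ)+1)..(((k+1:ℕ):ℝ)+1), (Fn n u - M) * (1/u)| :=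
        Finset.abs_sum_le_sum_abs _ _
      _ ≤ ∑ k ∈ Finset.range (N-1), (6/((k:ℝ)+1) - 6/(((k+1:ℕ):ℝ)+1)) :=
        Finset.sum_le_sum hterm
      _ = 6/(((0:ℕ):ℝ)+1) - 6/(((N-1:ℕ):ℝ)+1) := hstep
      _ ≤ 6 := by
          rw [hend]
          have h6 : (0:ℝ) ≤ 6/(N:ℝ) := by positivity
          have h7 : 6/(((0:ℕ):ℝ)+1) = 6 := by norm_num
          linarith
  rw [hsplit]
  calc |(∫ u in (1:ℝ)..(N:ℝ), (Fn n u - M) * (1/u))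
        + ∫ u in (N:ℝ)..T, (Fn n u - M) * (1/u)|
      ≤ |∫ u in (1:ℝ)..(N:ℝ), (Fn n u - M) * (1/u)|
        + |∫ u in (N:ℝ)..T, (Fn n u - M) * (1/u)| := abs_add_le _ _
    _ ≤ 6 + 6 := add_le_add hheadsum htail
    _ ≤ 13 := by norm_num
end

section
/- Let f and F be completely multiplicative-type Dirichlet series coefficients with |a_n| ≤ b_n for all n ≥ 1, where Σ a_n n^{-s} and Σ b_n n^{-s} converge absolutely for Re(s) > 1. Then for any u ≥ 0 and σ > 1, ∫_{-u}^{u} |Σ_{n≥1} a_n n^{-σ-it}|² dt ≤ 3 ∫_{-u}^{u} |Σ_{n≥1} b_n n^{-σ-it}|² dt. -/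
open Complex

open MeasureTheory Set


noncomputable section

private def mlog (n : ℕ) : ℂ := ((Real.log (n+1) : ℝ) : ℂ)

private def eph (n : ℕ) (x : ℝ) : ℂ := Complex.exp (-((x:ℂ) * mlog n * Complex.I))

private lemma eph_norm (n : ℕ) (x : ℝ) : ‖eph n x‖ = 1 := by
  rw [eph, Complex.norm_exp]
  have : (-((x:ℂ) * mlog n * Complex.I)).re = 0 := by
    simp [mlog, Complex.mul_re, Complex.mul_im]
  rw [this, Real.exp_zero]

private lemma eph_cont (n : ℕ) : Continuous (eph n) := by
  unfold eph; fun_prop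

private lemma conj_eph (n : ℕ) (x : ℝ) :
    (starRingEnd ℂ) (eph n x) = Complex.exp ((x:ℂ) * mlog n * Complex.I) := by
  rw [eph, ← Complex.exp_conj]
  congr 1
  simp [mlog]

private lemma div_cpow_eq (z : ℂ) (n : ℕ) (w : ℂ) :
    z / (n + 1 : ℂ) ^ w = z * Complex.exp (-(w * mlog n)) := by
  have hne : (n + 1 : ℂ) ≠ 0 := by
    have := Nat.cast_add_one_ne_zero (R := ℂ) n
    exact_mod_cast this
  have hlog : Complex.log (n + 1 : ℂ) = mlog n := by
    rw [mlog]
    rw [Complex.ofReal_log (by positivity : (0:ℝ) ≤ (n+1:ℝ))]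
    norm_num
  rw [Complex.cpow_def_of_ne_zero hne, hlog, div_eq_mul_inv, ← Complex.exp_neg]
  ring_nf

private lemma exp_split (n : ℕ) (σ τ x y : ℝ) :
    Complex.exp (-((↑σ + ↑(τ + (x - y)) * Complex.I) * mlog n))
      = Complex.exp (-((↑σ + ↑τ * Complex.I) * mlog n)) * eph n x * (starRingEnd ℂ) (eph n y) := by
  rw [conj_eph, eph, ← Complex.exp_add, ← Complex.exp_add]
  congr 1
  push_cast
  ring

private lemma norm_exp_mlog (n : ℕ) (w : ℂ) :
    ‖Complex.exp (-(w * mlog n))‖ = Real.exp (-(w.re * Real.log (n+1))) := by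
  rw [Complex.norm_exp]
  congr 1
  simp [mlog, Complex.mul_re]

private lemma exp_neg_sigma_log (n : ℕ) (σ : ℝ) :
    Real.exp (-(σ * Real.log (n+1))) = ((n:ℝ)+1) ^ (-σ) := by
  rw [Real.rpow_def_of_pos (by positivity : (0:ℝ) < (n:ℝ)+1)]
  norm_num
  ring_nf

private lemma summable_coef {b : ℕ → ℝ} {σ : ℝ}
    (hb : Summable (fun n : ℕ => b (n + 1) / (n + 1 : ℝ) ^ σ)) :
    Summable (fun n : ℕ => b (n+1) * Real.exp (-(σ * Real.log (n+1)))) := by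
  have h : ∀ n : ℕ, b (n+1) * Real.exp (-(σ * Real.log (n+1))) = b (n + 1) / (n + 1 : ℝ) ^ σ := by
    intro n
    rw [exp_neg_sigma_log n σ, Real.rpow_neg (by positivity : (0:ℝ) ≤ (n:ℝ)+1), div_eq_mul_inv]
  simpa [h] using hb

section Ident

variable (u : ℝ) (κ : ℕ → ℂ)

private def Hterm (n : ℕ) (x y : ℝ) : ℂ := κ n * eph n x * (starRingEnd ℂ) (eph n y)

private def Wp (p : ℕ × ℕ) (x y : ℝ) : ℂ :=
  Hterm κ p.1 x y * (starRingEnd ℂ) (Hterm κ p.2 x y)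

private def Ap (p : ℕ × ℕ) : ℂ := ∫ x in Ioc (0:ℝ) u, eph p.1 x * (starRingEnd ℂ) (eph p.2 x)

private def Gy (p : ℕ × ℕ) (y : ℝ) : ℂ :=
  (κ p.1 * (starRingEnd ℂ) (κ p.2) * Ap u p)
    * (starRingEnd ℂ) (eph p.1 y * (starRingEnd ℂ) (eph p.2 y))

variable {u κ}
variable {C : ℕ → ℝ} (hC : Summable C) (hκ : ∀ n, ‖κ n‖ ≤ C n) (hu : 0 ≤ u)

private lemma norm_Hterm (n : ℕ) (x y : ℝ) : ‖Hterm κ n x y‖ = ‖κ n‖ := by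
  rw [Hterm, norm_mul, norm_mul, eph_norm, RCLike.norm_conj, eph_norm, mul_one, mul_one]

private lemma Hterm_cont_x (n : ℕ) (y : ℝ) : Continuous (fun x => Hterm κ n x y) := by
  unfold Hterm
  exact (continuous_const.mul (eph_cont n)).mul continuous_const

include hC hκ in
private lemma summable_norm_κ : Summable (fun n => ‖κ n‖) :=
  hC.of_nonneg_of_le (fun n => norm_nonneg _) hκ

include hC hκ in
private lemma summable_Hterm (x y : ℝ) : Summable (fun n => Hterm κ n x y) := by
  apply Summable.of_norm
  simpa only [norm_Hterm] using summable_norm_κ hC hκ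

include hC hκ in
private lemma summable_prod_norm :
    Summable (fun p : ℕ × ℕ => ‖κ p.1‖ * ‖κ p.2‖) :=
  (summable_norm_κ hC hκ).mul_of_nonneg (summable_norm_κ hC hκ)
    (fun _ => norm_nonneg _) (fun _ => norm_nonneg _)

private lemma norm_Wp (p : ℕ × ℕ) (x y : ℝ) : ‖Wp κ p x y‖ = ‖κ p.1‖ * ‖κ p.2‖ := by
  rw [Wp, norm_mul, RCLike.norm_conj, norm_Hterm, norm_Hterm]

include hC hκ in
private lemma summable_Wp (x y : ℝ) : Summable (fun p : ℕ × ℕ => Wp κ p x y) := by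
  apply Summable.of_norm
  simpa only [norm_Wp] using summable_prod_norm hC hκ

-- expansion of |H|^2 as a double sum
include hC hκ in
private lemma expand_sq (x y : ℝ) :
    (∑' n, Hterm κ n x y) * (starRingEnd ℂ) (∑' n, Hterm κ n x y)
      = ∑' p : ℕ × ℕ, Wp κ p x y := by
  have hconj : (starRingEnd ℂ) (∑' n, Hterm κ n x y)
      = ∑' n, (starRingEnd ℂ) (Hterm κ n x y) := by
    simp only [starRingEnd_apply]
    exact tsum_star
  rw [hconj]
  rw [← tsum_mul_right]
  have : ∀ m, Hterm κ m x y * (∑' n, (starRingEnd ℂ) (Hterm κ n x y))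
      = ∑' n, Wp κ (m, n) x y := by
    intro m
    rw [← tsum_mul_left]
    rfl
  rw [tsum_congr this]
  exact (Summable.tsum_prod' (summable_Wp hC hκ x y) (fun m => by
    apply Summable.of_norm
    have : (fun n => ‖Wp κ (m, n) x y‖) = fun n => ‖κ m‖ * ‖κ n‖ := by
      funext n; exact norm_Wp (m,n) x y
    rw [this]
    exact (summable_norm_κ hC hκ).mul_left _)).symm

-- generic lintegral finiteness helper
include hu in
private lemma tsum_lintegral_ne_top {f : ℕ × ℕ → ℝ → ℂ} {M : ℕ × ℕ → ℝ}
    (hM : Summable M) (hM0 : ∀ p, 0 ≤ M p) (hbd : ∀ p x, ‖f p x‖ ≤ M p) :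
    ∑' p : ℕ × ℕ, ∫⁻ x in Ioc (0:ℝ) u, ‖f p x‖₊ ≠ ⊤ := by
  have h1 : ∀ p : ℕ × ℕ, ∫⁻ x in Ioc (0:ℝ) u, (‖f p x‖₊ : ENNReal)
      ≤ ENNReal.ofReal (M p) * ENNReal.ofReal u := by
    intro p
    calc ∫⁻ x in Ioc (0:ℝ) u, (‖f p x‖₊ : ENNReal)
        ≤ ∫⁻ _x in Ioc (0:ℝ) u, ENNReal.ofReal (M p) := by
          apply lintegral_mono
          intro x
          show (‖f p x‖₊ : ENNReal) ≤ ENNReal.ofReal (M p)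
          rw [← ENNReal.ofReal_coe_nnreal, coe_nnnorm]
          exact ENNReal.ofReal_le_ofReal (hbd p x)
      _ = ENNReal.ofReal (M p) * volume (Ioc (0:ℝ) u) := setLIntegral_const _ _
      _ = ENNReal.ofReal (M p) * ENNReal.ofReal u := by rw [Real.volume_Ioc, sub_zero]
  apply ne_top_of_le_ne_top ?_ (ENNReal.tsum_le_tsum h1)
  rw [ENNReal.tsum_mul_right, ← ENNReal.ofReal_tsum_of_nonneg hM0 hM]
  exact ENNReal.mul_ne_top ENNReal.ofReal_ne_top ENNReal.ofReal_ne_top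

include hC hκ hu in
private lemma inner_swap (y : ℝ) :
    ∫ x in Ioc (0:ℝ) u, (∑' p : ℕ × ℕ, Wp κ p x y)
      = ∑' p : ℕ × ℕ, ∫ x in Ioc (0:ℝ) u, Wp κ p x y := by
  apply integral_tsum
  · intro p
    apply Continuous.aestronglyMeasurable
    unfold Wp Hterm
    exact ((continuous_const.mul (eph_cont p.1)).mul continuous_const).mul
      (Complex.continuous_conj.comp
        ((continuous_const.mul (eph_cont p.2)).mul continuous_const))
  · exact tsum_lintegral_ne_top hu (summable_prod_norm hC hκ)
      (fun p => mul_nonneg (norm_nonneg _) (norm_nonneg _))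
      (fun p x => le_of_eq (norm_Wp p x y))

private lemma Wp_rearr (p : ℕ × ℕ) (x y : ℝ) :
    Wp κ p x y = (κ p.1 * (starRingEnd ℂ) (κ p.2)
        * (starRingEnd ℂ) (eph p.1 y * (starRingEnd ℂ) (eph p.2 y)))
      * (eph p.1 x * (starRingEnd ℂ) (eph p.2 x)) := by
  simp only [Wp, Hterm, map_mul, Complex.conj_conj]
  ring

private lemma xint_Wp (p : ℕ × ℕ) (y : ℝ) :
    ∫ x in Ioc (0:ℝ) u, Wp κ p x y
      = (κ p.1 * (starRingEnd ℂ) (κ p.2) * Ap u p)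
        * (starRingEnd ℂ) (eph p.1 y * (starRingEnd ℂ) (eph p.2 y)) := by
  have : ∀ x, Wp κ p x y = (κ p.1 * (starRingEnd ℂ) (κ p.2)
        * (starRingEnd ℂ) (eph p.1 y * (starRingEnd ℂ) (eph p.2 y)))
      * (eph p.1 x * (starRingEnd ℂ) (eph p.2 x)) := fun x => Wp_rearr p x y
  rw [MeasureTheory.integral_congr_ae (Filter.Eventually.of_forall this), integral_const_mul]
  rw [Ap]
  ring

include hu in
private lemma Ap_norm_le (p : ℕ × ℕ) : ‖Ap u p‖ ≤ u := by
  have h := norm_setIntegral_le_of_norm_le_const (μ := volume)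
    (f := fun x => eph p.1 x * (starRingEnd ℂ) (eph p.2 x)) (s := Ioc (0:ℝ) u) (C := 1)
    (by rw [Real.volume_Ioc]; exact ENNReal.ofReal_lt_top)
    (fun x _ => by rw [norm_mul, eph_norm, RCLike.norm_conj, eph_norm, mul_one])
  rw [Ap]
  calc ‖∫ x in Ioc (0:ℝ) u, eph p.1 x * (starRingEnd ℂ) (eph p.2 x)‖
      ≤ 1 * (volume (Ioc (0:ℝ) u)).toReal := h
    _ = u := by rw [one_mul, Real.volume_Ioc, sub_zero, ENNReal.toReal_ofReal hu]

private lemma norm_Gy (p : ℕ × ℕ) (y : ℝ) :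
    ‖Gy u κ p y‖ = ‖κ p.1‖ * ‖κ p.2‖ * ‖Ap u p‖ := by
  rw [Gy, norm_mul, norm_mul, norm_mul, RCLike.norm_conj, RCLike.norm_conj,
    norm_mul, RCLike.norm_conj, eph_norm, eph_norm, mul_one, mul_one]

include hC hκ hu in
private lemma summable_Gy_bound :
    Summable (fun p : ℕ × ℕ => ‖κ p.1‖ * ‖κ p.2‖ * u) :=
  (summable_prod_norm hC hκ).mul_right u

include hC hκ hu in
private lemma outer_swap :
    ∫ y in Ioc (0:ℝ) u, (∑' p : ℕ × ℕ, Gy u κ p y)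
      = ∑' p : ℕ × ℕ, ∫ y in Ioc (0:ℝ) u, Gy u κ p y := by
  apply integral_tsum
  · intro p
    apply Continuous.aestronglyMeasurable
    unfold Gy
    exact continuous_const.mul (Complex.continuous_conj.comp
      ((eph_cont p.1).mul (Complex.continuous_conj.comp (eph_cont p.2))))
  · apply tsum_lintegral_ne_top hu (summable_Gy_bound hC hκ hu)
      (fun p => mul_nonneg (mul_nonneg (norm_nonneg _) (norm_nonneg _)) hu)
    intro p y
    rw [norm_Gy]
    exact mul_le_mul_of_nonneg_left (Ap_norm_le hu p)
      (mul_nonneg (norm_nonneg _) (norm_nonneg _))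

include hu in
private lemma yint_Gy (p : ℕ × ℕ) :
    ∫ y in Ioc (0:ℝ) u, Gy u κ p y
      = (κ p.1 * (starRingEnd ℂ) (κ p.2) * Ap u p) * (starRingEnd ℂ) (Ap u p) := by
  unfold Gy
  rw [integral_const_mul, integral_conj]
  rfl

include hC hκ hu in
private lemma main_ident :
    ∫ y in Ioc (0:ℝ) u, ∫ x in Ioc (0:ℝ) u, ‖∑' n, Hterm κ n x y‖^2
      = ∑' p : ℕ × ℕ, (κ p.1 * (starRingEnd ℂ) (κ p.2)).re * normSq (Ap u p) := by
  have hsqnorm : ∀ z : ℂ, ‖z‖^2 = (z * (starRingEnd ℂ) z).re := fun z => by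
    rw [Complex.mul_conj, Complex.ofReal_re, Complex.normSq_eq_norm_sq]
  have hHcont : ∀ y : ℝ, Continuous (fun x => ∑' n, Hterm κ n x y) := by
    intro y
    apply continuous_tsum (fun n => Hterm_cont_x n y) hC
    intro n x
    rw [norm_Hterm]
    exact hκ n
  have hinner : ∀ y : ℝ, (∫ x in Ioc (0:ℝ) u, ‖∑' n, Hterm κ n x y‖^2)
      = (∑' p : ℕ × ℕ, Gy u κ p y).re := by
    intro y
    have h1 : ∀ x : ℝ, ‖∑' n, Hterm κ n x y‖^2 = (∑' p : ℕ × ℕ, Wp κ p x y).re := by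
      intro x
      rw [hsqnorm, expand_sq hC hκ]
    have hInt : Integrable (fun x => ∑' p : ℕ × ℕ, Wp κ p x y)
        (volume.restrict (Ioc (0:ℝ) u)) := by
      have heq : (fun x => ∑' p : ℕ × ℕ, Wp κ p x y)
          = fun x => (∑' n, Hterm κ n x y) * (starRingEnd ℂ) (∑' n, Hterm κ n x y) := by
        funext x
        rw [expand_sq hC hκ]
      rw [heq]
      exact ((hHcont y).mul (Complex.continuous_conj.comp (hHcont y))).integrableOn_Ioc
    calc (∫ x in Ioc (0:ℝ) u, ‖∑' n, Hterm κ n x y‖^2)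
        = ∫ x in Ioc (0:ℝ) u, (∑' p : ℕ × ℕ, Wp κ p x y).re := by
          apply MeasureTheory.integral_congr_ae
          exact Filter.Eventually.of_forall (fun x => h1 x)
      _ = (∫ x in Ioc (0:ℝ) u, ∑' p : ℕ × ℕ, Wp κ p x y).re := by
          simpa only [RCLike.re_to_complex] using integral_re hInt
      _ = (∑' p : ℕ × ℕ, ∫ x in Ioc (0:ℝ) u, Wp κ p x y).re := by
          rw [inner_swap hC hκ hu y]
      _ = (∑' p : ℕ × ℕ, Gy u κ p y).re := by
          congr 1
          exact tsum_congr (fun p => xint_Wp p y)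
  have hGyInt : Integrable (fun y => ∑' p : ℕ × ℕ, Gy u κ p y)
      (volume.restrict (Ioc (0:ℝ) u)) := by
    have hcont : Continuous (fun y => ∑' p : ℕ × ℕ, Gy u κ p y) := by
      apply continuous_tsum
        (f := fun (p : ℕ × ℕ) (y : ℝ) => Gy u κ p y)
        (fun p => continuous_const.mul (Complex.continuous_conj.comp
          ((eph_cont p.1).mul (Complex.continuous_conj.comp (eph_cont p.2)))))
        (summable_Gy_bound hC hκ hu)
      intro p y
      rw [norm_Gy]
      exact mul_le_mul_of_nonneg_left (Ap_norm_le hu p)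
        (mul_nonneg (norm_nonneg _) (norm_nonneg _))
    exact hcont.integrableOn_Ioc
  have hsumAconj : Summable (fun p : ℕ × ℕ =>
      (κ p.1 * (starRingEnd ℂ) (κ p.2) * Ap u p) * (starRingEnd ℂ) (Ap u p)) := by
    apply Summable.of_norm
    apply Summable.of_nonneg_of_le (fun p => norm_nonneg _)
      (g := fun p => ‖(κ p.1 * (starRingEnd ℂ) (κ p.2) * Ap u p) * (starRingEnd ℂ) (Ap u p)‖)
      (f := fun p : ℕ × ℕ => ‖κ p.1‖ * ‖κ p.2‖ * u * u)
    · intro p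
      rw [norm_mul, norm_mul, norm_mul, RCLike.norm_conj, RCLike.norm_conj]
      have h1 : 0 ≤ ‖κ p.1‖ * ‖κ p.2‖ := mul_nonneg (norm_nonneg _) (norm_nonneg _)
      have h2 : ‖Ap u p‖ * ‖Ap u p‖ ≤ u * u :=
        mul_le_mul (Ap_norm_le hu p) (Ap_norm_le hu p) (norm_nonneg _) hu
      nlinarith [mul_le_mul_of_nonneg_left h2 h1]
    · exact (summable_Gy_bound hC hκ hu).mul_right u
  calc (∫ y in Ioc (0:ℝ) u, ∫ x in Ioc (0:ℝ) u, ‖∑' n, Hterm κ n x y‖^2)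
      = ∫ y in Ioc (0:ℝ) u, (∑' p : ℕ × ℕ, Gy u κ p y).re := by
        apply MeasureTheory.integral_congr_ae
        exact Filter.Eventually.of_forall (fun y => hinner y)
    _ = (∫ y in Ioc (0:ℝ) u, ∑' p : ℕ × ℕ, Gy u κ p y).re := by
        simpa only [RCLike.re_to_complex] using integral_re hGyInt
    _ = (∑' p : ℕ × ℕ, ∫ y in Ioc (0:ℝ) u, Gy u κ p y).re := by
        rw [outer_swap hC hκ hu]
    _ = (∑' p : ℕ × ℕ, (κ p.1 * (starRingEnd ℂ) (κ p.2) * Ap u p)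
          * (starRingEnd ℂ) (Ap u p)).re := by
        congr 1
        exact tsum_congr (fun p => yint_Gy hu p)
    _ = ∑' p : ℕ × ℕ, ((κ p.1 * (starRingEnd ℂ) (κ p.2) * Ap u p)
          * (starRingEnd ℂ) (Ap u p)).re := by
        have := Complex.reCLM.map_tsum hsumAconj
        simpa using this
    _ = ∑' p : ℕ × ℕ, (κ p.1 * (starRingEnd ℂ) (κ p.2)).re * normSq (Ap u p) := by
        apply tsum_congr
        intro p
        rw [mul_assoc, Complex.mul_conj, Complex.mul_re]
        simp

include hu in
private lemma normSq_Ap_le (p : ℕ × ℕ) : normSq (Ap u p) ≤ u * u := by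
  rw [Complex.normSq_eq_norm_sq]
  have h := Ap_norm_le hu p
  nlinarith [norm_nonneg (Ap u p)]

include hC hκ hu in
private lemma J_compare :
    (∑' p : ℕ × ℕ, (κ p.1 * (starRingEnd ℂ) (κ p.2)).re * normSq (Ap u p))
      ≤ ∑' p : ℕ × ℕ, (((C p.1 : ℝ) : ℂ) * (starRingEnd ℂ) ((C p.2 : ℝ) : ℂ)).re
          * normSq (Ap u p) := by
  have hC0 : ∀ n, 0 ≤ C n := fun n => le_trans (norm_nonneg _) (hκ n)
  have hre : ∀ p : ℕ × ℕ, (((C p.1 : ℝ) : ℂ) * (starRingEnd ℂ) ((C p.2 : ℝ) : ℂ)).re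
      = C p.1 * C p.2 := by
    intro p
    rw [Complex.conj_ofReal, ← Complex.ofReal_mul, Complex.ofReal_re]
  have hterm : ∀ p : ℕ × ℕ, (κ p.1 * (starRingEnd ℂ) (κ p.2)).re * normSq (Ap u p)
      ≤ (((C p.1 : ℝ) : ℂ) * (starRingEnd ℂ) ((C p.2 : ℝ) : ℂ)).re * normSq (Ap u p) := by
    intro p
    rw [hre]
    apply mul_le_mul_of_nonneg_right _ (Complex.normSq_nonneg _)
    calc (κ p.1 * (starRingEnd ℂ) (κ p.2)).re ≤ ‖κ p.1 * (starRingEnd ℂ) (κ p.2)‖ := by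
          exact Complex.re_le_norm _
      _ = ‖κ p.1‖ * ‖κ p.2‖ := by rw [norm_mul, RCLike.norm_conj]
      _ ≤ C p.1 * C p.2 := mul_le_mul (hκ _) (hκ _) (norm_nonneg _) (hC0 _)
  have hCprod : Summable (fun p : ℕ × ℕ => C p.1 * C p.2) :=
    hC.mul_of_nonneg hC (fun n => hC0 n) (fun n => hC0 n)
  have hRHSsum : Summable (fun p : ℕ × ℕ =>
      (((C p.1 : ℝ) : ℂ) * (starRingEnd ℂ) ((C p.2 : ℝ) : ℂ)).re * normSq (Ap u p)) := by
    apply Summable.of_nonneg_of_le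
      (fun p => by
        rw [hre]
        exact mul_nonneg (mul_nonneg (hC0 _) (hC0 _)) (Complex.normSq_nonneg _))
      (fun p => by
        rw [hre]
        exact mul_le_mul_of_nonneg_left (normSq_Ap_le hu p)
          (mul_nonneg (hC0 _) (hC0 _)))
      (hCprod.mul_right (u * u))
  have hLHSsum : Summable (fun p : ℕ × ℕ =>
      (κ p.1 * (starRingEnd ℂ) (κ p.2)).re * normSq (Ap u p)) := by
    apply Summable.of_norm
    apply Summable.of_nonneg_of_le (fun p => norm_nonneg _)
      (f := fun p : ℕ × ℕ => C p.1 * C p.2 * (u * u))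
    · intro p
      rw [Real.norm_eq_abs, abs_mul]
      have e1 : |(κ p.1 * (starRingEnd ℂ) (κ p.2)).re| ≤ ‖κ p.1 * (starRingEnd ℂ) (κ p.2)‖ := by
        exact Complex.abs_re_le_norm _
      have e2 : ‖κ p.1 * (starRingEnd ℂ) (κ p.2)‖ = ‖κ p.1‖ * ‖κ p.2‖ := by
        rw [norm_mul, RCLike.norm_conj]
      have e3 : ‖κ p.1‖ * ‖κ p.2‖ ≤ C p.1 * C p.2 :=
        mul_le_mul (hκ _) (hκ _) (norm_nonneg _) (hC0 _)
      have e4 : |(κ p.1 * (starRingEnd ℂ) (κ p.2)).re| ≤ C p.1 * C p.2 :=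
        le_trans (le_of_le_of_eq e1 e2) e3
      apply mul_le_mul e4 _ (abs_nonneg _) (mul_nonneg (hC0 _) (hC0 _))
      rw [_root_.abs_of_nonneg (Complex.normSq_nonneg _)]
      exact normSq_Ap_le hu p
    · exact hCprod.mul_right (u * u)
  exact Summable.tsum_le_tsum hterm hLHSsum hRHSsum

end Ident

end

private noncomputable def kfam (A : ℕ → ℂ) (σ τ : ℝ) : ℕ → ℂ :=
  fun m => A (m+1) * Complex.exp (-(((σ:ℂ) + (τ:ℂ) * Complex.I) * mlog m))

private lemma tsum_bridge (A : ℕ → ℂ) (σ τ x y : ℝ) :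
    (∑' n : ℕ, A (n + 1) / (n + 1 : ℂ) ^ ((σ:ℂ) + (↑(τ + (x - y)) : ℂ) * Complex.I))
      = ∑' n : ℕ, Hterm (kfam A σ τ) n x y := by
  apply tsum_congr
  intro n
  rw [div_cpow_eq, exp_split]
  unfold Hterm kfam
  ring

private lemma kappaG_eq (bb : ℕ → ℝ) (σ : ℝ) (n : ℕ) :
    kfam (fun m => (bb m : ℂ)) σ 0 n
      = ((bb (n+1) * Real.exp (-(σ * Real.log (n+1))) : ℝ) : ℂ) := by
  unfold kfam
  simp only [Complex.ofReal_zero, zero_mul, add_zero, mlog]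
  rw [← Complex.ofReal_mul, ← Complex.ofReal_neg, ← Complex.ofReal_exp, ← Complex.ofReal_mul]

private lemma kappa_bound (aa : ℕ → ℂ) (bb : ℕ → ℝ)
    (hab : ∀ n : ℕ, 1 ≤ n → ‖aa n‖ ≤ bb n) (σ τ : ℝ) (n : ℕ) :
    ‖kfam aa σ τ n‖ ≤ bb (n+1) * Real.exp (-(σ * Real.log (n+1))) := by
  unfold kfam
  rw [norm_mul, norm_exp_mlog]
  have hre : ((σ:ℂ) + (τ:ℂ) * Complex.I).re = σ := by simp
  rw [hre]
  exact mul_le_mul_of_nonneg_right (hab (n+1) (Nat.le_add_left 1 n)) (Real.exp_nonneg _)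

private lemma cont_integrand (aa : ℕ → ℂ) (bb : ℕ → ℝ)
    (hab : ∀ n : ℕ, 1 ≤ n → ‖aa n‖ ≤ bb n) (σ : ℝ)
    (hbs : Summable (fun n : ℕ => bb (n+1) * Real.exp (-(σ * Real.log (n+1))))) :
    Continuous (fun t : ℝ =>
      ‖∑' n : ℕ, aa (n + 1) / (n + 1 : ℂ) ^ ((σ:ℂ) + (t:ℂ) * Complex.I)‖ ^ 2) := by
  have heq : (fun t : ℝ => ∑' n : ℕ, aa (n + 1) / (n + 1 : ℂ) ^ ((σ:ℂ) + (t:ℂ) * Complex.I))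
      = fun t : ℝ => ∑' n : ℕ,
          aa (n+1) * Complex.exp (-(((σ:ℂ) + (t:ℂ) * Complex.I) * mlog n)) := by
    funext t
    exact tsum_congr (fun n => div_cpow_eq _ n _)
  have hc : Continuous (fun t : ℝ => ∑' n : ℕ,
      aa (n+1) * Complex.exp (-(((σ:ℂ) + (t:ℂ) * Complex.I) * mlog n))) := by
    apply continuous_tsum
      (f := fun (n : ℕ) (t : ℝ) =>
        aa (n+1) * Complex.exp (-(((σ:ℂ) + (t:ℂ) * Complex.I) * mlog n)))
      (fun n => by fun_prop)
      hbs
    intro n t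
    exact kappa_bound aa bb hab σ t n
  have : (fun t : ℝ =>
      ‖∑' n : ℕ, aa (n + 1) / (n + 1 : ℂ) ^ ((σ:ℂ) + (t:ℂ) * Complex.I)‖ ^ 2)
      = fun t : ℝ => ‖∑' n : ℕ,
          aa (n+1) * Complex.exp (-(((σ:ℂ) + (t:ℂ) * Complex.I) * mlog n))‖ ^ 2 := by
    funext t
    rw [congrFun heq t]
  rw [this]
  exact (hc.norm).pow 2

-- Step II : interval bookkeeping
private lemma stepII (Φ : ℝ → ℝ) (hcont : Continuous Φ) (hnn : ∀ t, 0 ≤ Φ t)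
    (u : ℝ) (hu : 0 ≤ u) :
    u * (∫ t in (-u)..u, Φ t)
      ≤ (∫ y in (0:ℝ)..u, ∫ t in ((-u) - y)..((-u) + u - y), Φ t)
        + (∫ y in (0:ℝ)..u, ∫ t in ((0:ℝ) - y)..((0:ℝ) + u - y), Φ t)
        + (∫ y in (0:ℝ)..u, ∫ t in (u - y)..(u + u - y), Φ t) := by
  have hII : ∀ a₁ b₁ : ℝ, IntervalIntegrable Φ volume a₁ b₁ :=
    fun a₁ b₁ => hcont.intervalIntegrable a₁ b₁
  have hP : Continuous (fun z => ∫ t in (0:ℝ)..z, Φ t) :=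
    intervalIntegral.continuous_primitive hII 0
  have hVeq : ∀ τ y : ℝ, (∫ t in (τ - y)..(τ + u - y), Φ t)
      = (∫ t in (0:ℝ)..(τ + u - y), Φ t) - ∫ t in (0:ℝ)..(τ - y), Φ t :=
    fun τ y => (intervalIntegral.integral_interval_sub_left (hII 0 _) (hII 0 _)).symm
  have hVcont : ∀ τ : ℝ, Continuous (fun y => ∫ t in (τ - y)..(τ + u - y), Φ t) := by
    intro τ
    have : (fun y => ∫ t in (τ - y)..(τ + u - y), Φ t)
        = fun y => (∫ t in (0:ℝ)..(τ + u - y), Φ t) - ∫ t in (0:ℝ)..(τ - y), Φ t := by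
      funext y
      exact hVeq τ y
    rw [this]
    exact (hP.comp (by fun_prop)).sub (hP.comp (by fun_prop))
  have hWsum : ∀ y : ℝ, y ∈ Set.Icc 0 u → (∫ t in (-u)..u, Φ t)
      ≤ ((∫ t in ((-u) - y)..((-u) + u - y), Φ t)
        + (∫ t in ((0:ℝ) - y)..((0:ℝ) + u - y), Φ t)
        + ∫ t in (u - y)..(u + u - y), Φ t) := by
    intro y hy
    obtain ⟨hy0, hyu⟩ := hy
    have e1 : (-u) + u - y = (0:ℝ) - y := by ring
    have e2 : (0:ℝ) + u - y = u - y := by ring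
    rw [e1, e2]
    rw [intervalIntegral.integral_add_adjacent_intervals (hII _ _) (hII _ _),
      intervalIntegral.integral_add_adjacent_intervals (hII _ _) (hII _ _)]
    -- now : ∫ (-u)..u ≤ ∫ (-u - y)..(u + u - y)
    have h1 : 0 ≤ ∫ t in (-u - y)..(-u), Φ t :=
      intervalIntegral.integral_nonneg (by linarith) (fun x _ => hnn x)
    have h2 : 0 ≤ ∫ t in u..(u + u - y), Φ t :=
      intervalIntegral.integral_nonneg (by linarith) (fun x _ => hnn x)
    have h3 : (∫ t in (-u - y)..(-u), Φ t) + (∫ t in (-u)..u, Φ t)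
        = ∫ t in (-u - y)..u, Φ t :=
      intervalIntegral.integral_add_adjacent_intervals (hII _ _) (hII _ _)
    have h4 : (∫ t in (-u - y)..u, Φ t) + (∫ t in u..(u + u - y), Φ t)
        = ∫ t in (-u - y)..(u + u - y), Φ t :=
      intervalIntegral.integral_add_adjacent_intervals (hII _ _) (hII _ _)
    linarith
  have hconst : u * (∫ t in (-u)..u, Φ t) = ∫ _y in (0:ℝ)..u, (∫ t in (-u)..u, Φ t) := by
    rw [intervalIntegral.integral_const, smul_eq_mul, sub_zero]
  rw [hconst]
  have hmono : (∫ _y in (0:ℝ)..u, (∫ t in (-u)..u, Φ t))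
      ≤ ∫ y in (0:ℝ)..u, ((∫ t in ((-u) - y)..((-u) + u - y), Φ t)
        + (∫ t in ((0:ℝ) - y)..((0:ℝ) + u - y), Φ t)
        + ∫ t in (u - y)..(u + u - y), Φ t) := by
    apply intervalIntegral.integral_mono_on hu intervalIntegrable_const
    · apply Continuous.intervalIntegrable
      have c1 := hVcont (-u)
      have c2 := hVcont 0
      have c3 := hVcont u
      exact (c1.add c2).add c3
    · exact hWsum
  calc (∫ _y in (0:ℝ)..u, (∫ t in (-u)..u, Φ t)) ≤ _ := hmono
    _ = (∫ y in (0:ℝ)..u, ∫ t in ((-u) - y)..((-u) + u - y), Φ t)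
        + (∫ y in (0:ℝ)..u, ∫ t in ((0:ℝ) - y)..((0:ℝ) + u - y), Φ t)
        + (∫ y in (0:ℝ)..u, ∫ t in (u - y)..(u + u - y), Φ t) := by
      rw [intervalIntegral.integral_add
          (f := fun y => (∫ t in ((-u) - y)..((-u) + u - y), Φ t) + ∫ t in ((0:ℝ) - y)..((0:ℝ) + u - y), Φ t)
          (g := fun y => ∫ t in (u - y)..(u + u - y), Φ t) (((hVcont (-u)).add (hVcont 0)).intervalIntegrable 0 u)
          ((hVcont u).intervalIntegrable 0 u),
        intervalIntegral.integral_add ((hVcont (-u)).intervalIntegrable 0 u)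
          ((hVcont 0).intervalIntegrable 0 u)]

private lemma Vswap (Φ : ℝ → ℝ) (τ u : ℝ) (hu : 0 ≤ u) :
    (∫ y in (0:ℝ)..u, ∫ t in (τ - y)..(τ + u - y), Φ t)
      = ∫ y in Ioc (0:ℝ) u, ∫ x in Ioc (0:ℝ) u, Φ (x + (τ - y)) := by
  have hinner : ∀ y : ℝ, (∫ t in (τ - y)..(τ + u - y), Φ t)
      = ∫ x in Ioc (0:ℝ) u, Φ (x + (τ - y)) := by
    intro y
    rw [← intervalIntegral.integral_of_le hu,
      intervalIntegral.integral_comp_add_right (fun t => Φ t) (τ - y)]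
    congr 1 <;> ring
  rw [intervalIntegral.integral_of_le hu]
  exact integral_congr_ae (Filter.Eventually.of_forall (fun y => hinner y))

private lemma stepIV (Φ : ℝ → ℝ) (hcont : Continuous Φ) (hnn : ∀ t, 0 ≤ Φ t)
    (u : ℝ) (hu : 0 ≤ u) :
    (∫ y in (0:ℝ)..u, ∫ t in ((0:ℝ) - y)..((0:ℝ) + u - y), Φ t)
      ≤ u * ∫ t in (-u)..u, Φ t := by
  have hII : ∀ a₁ b₁ : ℝ, IntervalIntegrable Φ volume a₁ b₁ :=
    fun a₁ b₁ => hcont.intervalIntegrable a₁ b₁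
  have hP : Continuous (fun z => ∫ t in (0:ℝ)..z, Φ t) :=
    intervalIntegral.continuous_primitive hII 0
  have hVcont : Continuous (fun y => ∫ t in ((0:ℝ) - y)..((0:ℝ) + u - y), Φ t) := by
    have heq : (fun y => ∫ t in ((0:ℝ) - y)..((0:ℝ) + u - y), Φ t)
        = fun y => (∫ t in (0:ℝ)..((0:ℝ) + u - y), Φ t) - ∫ t in (0:ℝ)..((0:ℝ) - y), Φ t := by
      funext y
      exact (intervalIntegral.integral_interval_sub_left (hII 0 _) (hII 0 _)).symm
    rw [heq]
    exact (hP.comp (by fun_prop)).sub (hP.comp (by fun_prop))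
  have hmono : ∀ y ∈ Set.Icc (0:ℝ) u, (∫ t in ((0:ℝ) - y)..((0:ℝ) + u - y), Φ t)
      ≤ ∫ t in (-u)..u, Φ t := by
    intro y hy
    obtain ⟨hy0, hyu⟩ := hy
    have h1 : 0 ≤ ∫ t in (-u)..((0:ℝ) - y), Φ t :=
      intervalIntegral.integral_nonneg (by linarith) (fun x _ => hnn x)
    have h2 : 0 ≤ ∫ t in ((0:ℝ) + u - y)..u, Φ t :=
      intervalIntegral.integral_nonneg (by linarith) (fun x _ => hnn x)
    have h3 : (∫ t in (-u)..((0:ℝ) - y), Φ t) + (∫ t in ((0:ℝ) - y)..((0:ℝ) + u - y), Φ t)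
        = ∫ t in (-u)..((0:ℝ) + u - y), Φ t :=
      intervalIntegral.integral_add_adjacent_intervals (hII _ _) (hII _ _)
    have h4 : (∫ t in (-u)..((0:ℝ) + u - y), Φ t) + (∫ t in ((0:ℝ) + u - y)..u, Φ t)
        = ∫ t in (-u)..u, Φ t :=
      intervalIntegral.integral_add_adjacent_intervals (hII _ _) (hII _ _)
    linarith
  calc (∫ y in (0:ℝ)..u, ∫ t in ((0:ℝ) - y)..((0:ℝ) + u - y), Φ t)
      ≤ ∫ _y in (0:ℝ)..u, (∫ t in (-u)..u, Φ t) := by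
        apply intervalIntegral.integral_mono_on hu
          (hVcont.intervalIntegrable 0 u) intervalIntegrable_const hmono
    _ = u * ∫ t in (-u)..u, Φ t := by
        rw [intervalIntegral.integral_const, smul_eq_mul, sub_zero]

/-- Montgomery's mean value inequality: if `|a_n| ≤ b_n` and both Dirichlet series converge
absolutely for `Re s > 1`, then for `u ≥ 0` and `σ > 1`,
`∫_{-u}^u |Σ a_n n^{-σ-it}|² dt ≤ 3 ∫_{-u}^u |Σ b_n n^{-σ-it}|² dt`. -/
theorem stmt_6 (a : ℕ → ℂ) (b : ℕ → ℝ)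
    (hab : ∀ n : ℕ, 1 ≤ n → ‖a n‖ ≤ b n)
    (hb : ∀ σ : ℝ, 1 < σ → Summable (fun n : ℕ => b (n + 1) / (n + 1 : ℝ) ^ σ)) :
    ∀ u : ℝ, 0 ≤ u → ∀ σ : ℝ, 1 < σ →
      (∫ t in (-u)..u, ‖∑' n : ℕ, a (n + 1) / (n + 1 : ℂ) ^ (σ + t * I)‖ ^ 2)
        ≤ 3 * ∫ t in (-u)..u, ‖∑' n : ℕ, (b (n + 1) : ℂ) / (n + 1 : ℂ) ^ (σ + t * I)‖ ^ 2 := by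
  intro u hu σ hσ
  set Φf : ℝ → ℝ :=
    fun t => ‖∑' n : ℕ, a (n + 1) / (n + 1 : ℂ) ^ ((σ : ℂ) + (t : ℂ) * Complex.I)‖ ^ 2 with hΦf
  set Φg : ℝ → ℝ :=
    fun t => ‖∑' n : ℕ, ((b (n + 1) : ℂ)) / (n + 1 : ℂ) ^ ((σ : ℂ) + (t : ℂ) * Complex.I)‖ ^ 2
    with hΦg
  rcases eq_or_lt_of_le hu with h0 | hupos
  · rw [← h0]
    norm_num
  -- main case u > 0
  have hb0 : ∀ n : ℕ, 0 ≤ b (n + 1) :=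
    fun n => le_trans (norm_nonneg _) (hab (n+1) (Nat.le_add_left 1 n))
  have hCsum : Summable (fun n : ℕ => b (n+1) * Real.exp (-(σ * Real.log (n+1)))) :=
    summable_coef (hb σ hσ)
  have hcnorm0 : ∀ n : ℕ, 0 ≤ b (n+1) * Real.exp (-(σ * Real.log (n+1))) :=
    fun n => mul_nonneg (hb0 n) (Real.exp_nonneg _)
  have hb' : ∀ n : ℕ, 1 ≤ n → ‖((b n : ℝ) : ℂ)‖ ≤ b n := by
    intro n hn
    rw [Complex.norm_real, Real.norm_eq_abs]
    exact le_of_eq (_root_.abs_of_nonneg (le_trans (norm_nonneg _) (hab n hn)))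
  have hcontf : Continuous Φf := by
    rw [hΦf]; exact cont_integrand a b hab σ hCsum
  have hcontg : Continuous Φg := by
    rw [hΦg]; exact cont_integrand (fun n => ((b n : ℝ) : ℂ)) b hb' σ hCsum
  have hΦf0 : ∀ t, 0 ≤ Φf t := fun t => by rw [hΦf]; positivity
  have hΦg0 : ∀ t, 0 ≤ Φg t := fun t => by rw [hΦg]; positivity
  have hκfbd : ∀ τ : ℝ, ∀ n : ℕ, ‖kfam a σ τ n‖ ≤ b (n+1) * Real.exp (-(σ * Real.log (n+1))) :=
    fun τ n => kappa_bound a b hab σ τ n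
  have hκgbd : ∀ n : ℕ, ‖kfam (fun m => ((b m : ℝ) : ℂ)) σ 0 n‖
      ≤ b (n+1) * Real.exp (-(σ * Real.log (n+1))) :=
    fun n => kappa_bound (fun m => ((b m : ℝ) : ℂ)) b hb' σ 0 n
  -- bridges
  have hbridgeF : ∀ τ y x : ℝ, Φf (x + (τ - y)) = ‖∑' n, Hterm (kfam a σ τ) n x y‖ ^ 2 := by
    intro τ y x
    have harg : x + (τ - y) = τ + (x - y) := by ring
    rw [hΦf]
    show ‖∑' n : ℕ, a (n + 1) / (n + 1 : ℂ) ^ ((σ : ℂ) + ((x + (τ - y) : ℝ) : ℂ) * Complex.I)‖ ^ 2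
      = _
    rw [harg, tsum_bridge a σ τ x y]
  have hbridgeG : ∀ y x : ℝ, Φg (x + ((0:ℝ) - y))
      = ‖∑' n, Hterm (kfam (fun m => ((b m : ℝ) : ℂ)) σ 0) n x y‖ ^ 2 := by
    intro y x
    have harg : x + ((0:ℝ) - y) = 0 + (x - y) := by ring
    rw [hΦg]
    show ‖∑' n : ℕ, ((b (n + 1) : ℝ) : ℂ)
        / (n + 1 : ℂ) ^ ((σ : ℂ) + ((x + ((0:ℝ) - y) : ℝ) : ℂ) * Complex.I)‖ ^ 2 = _
    rw [harg, tsum_bridge (fun m => ((b m : ℝ) : ℂ)) σ 0 x y]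
  -- V-pieces as double set integrals
  have hVs : ∀ τ : ℝ, (∫ y in (0:ℝ)..u, ∫ t in (τ - y)..(τ + u - y), Φf t)
      = ∫ y in Set.Ioc (0:ℝ) u, ∫ x in Set.Ioc (0:ℝ) u,
          ‖∑' n, Hterm (kfam a σ τ) n x y‖ ^ 2 := by
    intro τ
    rw [Vswap Φf τ u hu]
    apply integral_congr_ae
    apply Filter.Eventually.of_forall
    intro y
    apply integral_congr_ae
    apply Filter.Eventually.of_forall
    intro x
    exact hbridgeF τ y x
  have hVg : (∫ y in (0:ℝ)..u, ∫ t in ((0:ℝ) - y)..((0:ℝ) + u - y), Φg t)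
      = ∫ y in Set.Ioc (0:ℝ) u, ∫ x in Set.Ioc (0:ℝ) u,
          ‖∑' n, Hterm (kfam (fun m => ((b m : ℝ) : ℂ)) σ 0) n x y‖ ^ 2 := by
    rw [Vswap Φg 0 u hu]
    apply integral_congr_ae
    apply Filter.Eventually.of_forall
    intro y
    apply integral_congr_ae
    apply Filter.Eventually.of_forall
    intro x
    exact hbridgeG y x
  -- comparison of J-pieces to the G-piece
  have hJG : (∫ y in Set.Ioc (0:ℝ) u, ∫ x in Set.Ioc (0:ℝ) u,
        ‖∑' n, Hterm (kfam (fun m => ((b m : ℝ) : ℂ)) σ 0) n x y‖ ^ 2)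
      = ∑' p : ℕ × ℕ,
          (((b (p.1+1) * Real.exp (-(σ * Real.log (p.1+1))) : ℝ) : ℂ)
            * (starRingEnd ℂ) ((b (p.2+1) * Real.exp (-(σ * Real.log (p.2+1))) : ℝ) : ℂ)).re
            * normSq (Ap u p) := by
    rw [main_ident hCsum hκgbd hu]
    apply tsum_congr
    intro p
    rw [kappaG_eq b σ p.1, kappaG_eq b σ p.2]
  have hJle : ∀ τ : ℝ, (∫ y in Set.Ioc (0:ℝ) u, ∫ x in Set.Ioc (0:ℝ) u,
        ‖∑' n, Hterm (kfam a σ τ) n x y‖ ^ 2)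
      ≤ ∫ y in Set.Ioc (0:ℝ) u, ∫ x in Set.Ioc (0:ℝ) u,
          ‖∑' n, Hterm (kfam (fun m => ((b m : ℝ) : ℂ)) σ 0) n x y‖ ^ 2 := by
    intro τ
    rw [main_ident hCsum (hκfbd τ) hu, hJG]
    exact J_compare hCsum (hκfbd τ) hu
  -- assemble
  have h2 := stepII Φf hcontf hΦf0 u hu
  have h4 := stepIV Φg hcontg hΦg0 u hu
  have hval : ∀ τ : ℝ, (∫ y in (0:ℝ)..u, ∫ t in (τ - y)..(τ + u - y), Φf t)
      ≤ ∫ y in (0:ℝ)..u, ∫ t in ((0:ℝ) - y)..((0:ℝ) + u - y), Φg t := by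
    intro τ
    rw [hVs τ, hVg]
    exact hJle τ
  have hchain : u * (∫ t in (-u)..u, Φf t) ≤ u * (3 * ∫ t in (-u)..u, Φg t) := by
    have e1 := hval (-u)
    have e2 := hval 0
    have e3 := hval u
    have hfinal : (∫ y in (0:ℝ)..u, ∫ t in ((0:ℝ) - y)..((0:ℝ) + u - y), Φg t)
        ≤ u * ∫ t in (-u)..u, Φg t := h4
    nlinarith [h2]
  exact le_of_mul_le_mul_left hchain hupos
end

section
/- Let g ≥ 3 be odd, k ≥ 2 even, and k* := k/gcd(k,g). Then (1/k)·Σ_{ℓ mod k} max_{z ∈ μ_g ∪ {0}} Re(z·e(−ℓ/k)) = (1 − δ_g)·(π/(g k*))/tan(π/(g k*)), where δ_g := 1 − (g/π)·sin(π/g), μ_g is the set of g-th roots of unity, and e(x) = e^{2πix}. -/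
open Real Complex

lemma my_sum_cos_mul (θ : ℝ) (M : ℕ) :
    (∑ m ∈ Finset.range M, Real.cos (m * θ)) * (2 * Real.sin (θ/2))
      = Real.sin (M * θ - θ/2) + Real.sin (θ/2) := by
  induction M with
  | zero => simp [Real.sin_neg]
  | succ n ih =>
    rw [Finset.sum_range_succ, add_mul, ih]
    push_cast
    rw [show ((n:ℝ)+1) * θ - θ/2 = n*θ + θ/2 by ring, Real.sin_add, Real.sin_sub]
    ring

lemma my_T_eval (g n : ℕ) (hg : 3 ≤ g) (hn : 1 ≤ n) :
    ∑ m ∈ Finset.range (2*n),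
        Real.cos (2*π*(min (m:ℝ) (2*(n:ℝ) - m))/(g*(2*n)))
      = Real.sin (π/g) * Real.cos (π/(g*(2*n))) / Real.sin (π/(g*(2*n))) := by
  have hg0 : (0:ℝ) < g := by exact_mod_cast Nat.lt_of_lt_of_le (by norm_num) hg
  have hn0 : (0:ℝ) < n := by exact_mod_cast hn
  set θ : ℝ := π/(g*n) with hθ
  have hθ2 : π/((g:ℝ)*(2*n)) = θ/2 := by
    show π/((g:ℝ)*(2*n)) = (π/((g:ℝ)*n))/2
    rw [div_div, mul_assoc, mul_comm (2:ℝ) ((n:ℝ)), ← mul_assoc]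
  have hnθ : (n:ℝ) * θ = π/g := by
    show (n:ℝ) * (π/((g:ℝ)*n)) = π/g
    rw [← mul_div_assoc, show (g:ℝ)*n = n*g by ring, mul_div_mul_left _ _ (ne_of_gt hn0)]
  have hterm : ∀ x : ℝ, 2*π*x/((g:ℝ)*(2*n)) = x * θ := by
    intro x
    show 2*π*x/((g:ℝ)*(2*n)) = x * (π/((g:ℝ)*n))
    rw [← mul_div_assoc, show (g:ℝ)*(2*n) = 2*((g:ℝ)*n) by ring,
      show 2*π*x = 2*(x*π) by ring, mul_div_mul_left _ _ (two_ne_zero)]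
  have hspos : 0 < Real.sin (θ/2) := by
    apply Real.sin_pos_of_pos_of_lt_pi
    · rw [← hθ2]; positivity
    · rw [← hθ2]
      have hg3 : (3:ℝ) ≤ g := by exact_mod_cast hg
      have hn1 : (1:ℝ) ≤ n := by exact_mod_cast hn
      have h6 : (6:ℝ) ≤ (g:ℝ)*(2*n) := by nlinarith
      have h1 : π/((g:ℝ)*(2*n)) ≤ π/6 :=
        div_le_div_of_nonneg_left pi_pos.le (by norm_num) h6
      nlinarith [pi_pos]
  have hs : Real.sin (θ/2) ≠ 0 := ne_of_gt hspos
  have hsplit :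
      ∑ m ∈ Finset.range (2*n),
          Real.cos (2*π*(min (m:ℝ) (2*(n:ℝ) - m))/(g*(2*n)))
        = (∑ m ∈ Finset.range (n+1), Real.cos (m * θ))
          + ((∑ m ∈ Finset.range n, Real.cos (m * θ)) - 1) := by
    rw [show 2*n = (n+1) + (n-1) by omega, Finset.sum_range_add]
    congr 1
    · apply Finset.sum_congr rfl
      intro m hm
      rw [Finset.mem_range] at hm
      have hmn : (m:ℝ) ≤ n := by exact_mod_cast Nat.lt_succ_iff.mp hm
      rw [hterm, min_eq_left (by linarith)]
    · -- second chunk equals (∑_{m<n} cos(mθ)) - 1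
      have e1 : ∀ x ∈ Finset.range (n-1),
          Real.cos (2*π*(min ((n+1+x:ℕ):ℝ) (2*(n:ℝ) - (n+1+x:ℕ)))/(g*(2*n)))
            = Real.cos (((n-1-x : ℕ):ℝ) * θ) := by
        intro x hx
        rw [Finset.mem_range] at hx
        have hx2 : x + 2 ≤ n := by omega
        have hx2' : (x:ℝ) + 2 ≤ n := by exact_mod_cast hx2
        have hcast : ((n+1+x:ℕ):ℝ) = (n:ℝ)+1+x := by push_cast; ring
        have hcast2 : ((n-1-x : ℕ):ℝ) = (n:ℝ)-1-x := by
          rw [show n-1-x = n - (1+x) by omega, Nat.cast_sub (by omega)]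
          push_cast; ring
        rw [hterm, hcast, hcast2, min_eq_right (by linarith)]
        congr 1; ring
      rw [Finset.sum_congr rfl e1]
      have e2 : ∑ x ∈ Finset.range (n-1), Real.cos (((n-1-x : ℕ):ℝ) * θ)
          = ∑ x ∈ Finset.range (n-1), Real.cos (((x+1 : ℕ):ℝ) * θ) := by
        have hrefl := Finset.sum_range_reflect (fun j => Real.cos (((j+1 : ℕ):ℝ) * θ)) (n-1)
        rw [← hrefl]
        apply Finset.sum_congr rfl
        intro x hx
        rw [Finset.mem_range] at hx
        have hxx : n-1-x = (n-1-1-x)+1 := by omega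
        rw [hxx]
      rw [e2]
      have e3 : ∑ m ∈ Finset.range n, Real.cos ((m:ℝ) * θ)
          = (∑ x ∈ Finset.range (n-1), Real.cos (((x+1 : ℕ):ℝ) * θ)) + Real.cos ((0:ℕ) * θ) := by
        conv_lhs => rw [show n = (n-1)+1 by omega]
        rw [Finset.sum_range_succ']
      rw [e3]
      push_cast
      simp
  rw [hsplit, hθ2]
  have e4 := my_sum_cos_mul θ (n+1)
  have e5 := my_sum_cos_mul θ n
  have h2s : (2 * Real.sin (θ/2)) ≠ 0 := by positivity
  apply mul_right_cancel₀ h2s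
  rw [add_mul, sub_mul, e4, e5, one_mul]
  have ha : ((n+1:ℕ):ℝ) * θ - θ/2 = π/(g:ℝ) + θ/2 := by push_cast; rw [add_mul, one_mul, ← hnθ]; ring
  have hb : (n:ℝ) * θ - θ/2 = π/(g:ℝ) - θ/2 := by rw [← hnθ]
  rw [ha, hb, Real.sin_add, Real.sin_sub]
  field_simp
  ring


/-- Telescoping cosine sum. -/
lemma my_sum_mod_range (d K : ℕ) (hK : 0 < K) (F : ℕ → ℝ) :
    ∑ ℓ ∈ Finset.range (d * K), F (ℓ % K) = d * ∑ x ∈ Finset.range K, F x := by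
  induction d with
  | zero => simp
  | succ n ih =>
    have : (n+1) * K = n*K + K := by ring
    rw [this, Finset.sum_range_add, ih]
    have h2 : ∀ x ∈ Finset.range K, F ((n*K + x) % K) = F x := by
      intro x hx
      rw [Finset.mem_range] at hx
      rw [show n*K + x = x + n*K by ring, Nat.add_mul_mod_self_right, Nat.mod_eq_of_lt hx]
    rw [Finset.sum_congr rfl h2]
    push_cast
    ring

/-- Multiplication by a coprime residue permutes residues. -/
lemma my_sum_mul_mod (K a : ℕ) (hK : 2 ≤ K) (ha : Nat.Coprime a K) (F : ℕ → ℝ) :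
    ∑ x ∈ Finset.range K, F (a * x % K) = ∑ x ∈ Finset.range K, F x := by
  obtain ⟨b, -, hb⟩ := Nat.exists_mul_mod_eq_one_of_coprime ha (by omega)
  have key : ∀ x < K, b * (a * x % K) % K = x := by
    intro x hx
    have h1 : b * (a * x % K) ≡ b * (a * x) [MOD K] :=
      Nat.ModEq.mul_left b (Nat.mod_modEq (a*x) K)
    have h2 : b * (a * x) = (a * b) * x := by ring
    have h3 : (a*b) * x ≡ 1 * x [MOD K] := by
      refine Nat.ModEq.mul_right x ?_
      calc a * b ≡ a * b % K [MOD K] := (Nat.mod_modEq _ _).symm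
        _ = 1 := hb
    calc b * (a * x % K) % K = ((a*b)*x) % K := by rw [Nat.ModEq] at h1 h3; rw [h1, h2]
      _ = (1*x) % K := h3
      _ = x := by rw [one_mul, Nat.mod_eq_of_lt hx]
  have key2 : ∀ x < K, a * (b * x % K) % K = x := by
    intro x hx
    have h1 : a * (b * x % K) ≡ a * (b * x) [MOD K] :=
      Nat.ModEq.mul_left a (Nat.mod_modEq (b*x) K)
    have h2 : a * (b * x) = (a * b) * x := by ring
    have h3 : (a*b) * x ≡ 1 * x [MOD K] := by
      refine Nat.ModEq.mul_right x ?_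
      calc a * b ≡ a * b % K [MOD K] := (Nat.mod_modEq _ _).symm
        _ = 1 := hb
    calc a * (b * x % K) % K = ((a*b)*x) % K := by rw [Nat.ModEq] at h1 h3; rw [h1, h2]
      _ = (1*x) % K := h3
      _ = x := by rw [one_mul, Nat.mod_eq_of_lt hx]
  refine Finset.sum_nbij' (fun x => a * x % K) (fun y => b * y % K) ?_ ?_ ?_ ?_ ?_
  · intro x _; exact Finset.mem_range.mpr (Nat.mod_lt _ (by omega))
  · intro y _; exact Finset.mem_range.mpr (Nat.mod_lt _ (by omega))
  · intro x hx; exact key x (Finset.mem_range.mp hx)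
  · intro y hy; exact key2 y (Finset.mem_range.mp hy)
  · intro x _; rfl


lemma my_prod_re (a : ℝ) (k ℓ : ℕ) (hk : 0 < k) :
    (Complex.exp ((a:ℂ) * I) * Complex.exp (2 * (π:ℂ) * I * (-(ℓ : ℂ) / k))).re
      = Real.cos (a - 2*π*ℓ/k) := by
  rw [← Complex.exp_add]
  have hkc : (k:ℂ) ≠ 0 := Nat.cast_ne_zero.mpr (by omega)
  have : (a:ℂ)*I + 2 * (π:ℂ) * I * (-(ℓ : ℂ) / k) = ((a - 2*π*ℓ/k : ℝ):ℂ) * I := by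
    push_cast
    field_simp
    ring
  rw [this, Complex.exp_ofReal_mul_I_re]

lemma my_exp_pow (g j : ℕ) (hg : 0 < g) :
    (Complex.exp (((2*π*j/g : ℝ):ℂ) * I)) ^ g = 1 := by
  rw [← Complex.exp_nat_mul]
  have hgc : (g:ℂ) ≠ 0 := Nat.cast_ne_zero.mpr (by omega)
  have : (g:ℂ) * (((2*π*j/g : ℝ):ℂ) * I) = (j:ℂ) * (2 * (π:ℂ) * I) := by
    push_cast
    field_simp
  rw [this]
  exact_mod_cast Complex.exp_int_mul_two_pi_mul_I (j : ℤ)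

set_option maxHeartbeats 2000000 in
lemma my_sSup_eval (g k : ℕ) (hg : 3 ≤ g) (hk : 2 ≤ k) (ℓ : ℕ) :
    sSup {r : ℝ | ∃ z : ℂ, (z ^ g = 1 ∨ z = 0) ∧
        r = (z * Complex.exp (2 * (π:ℂ) * I * (-(ℓ : ℂ) / k))).re}
      = Real.cos (2*π*(min ((g*ℓ % k : ℕ):ℝ) ((k:ℝ) - (g*ℓ % k : ℕ)))/((g:ℝ)*k)) := by
  have hg0 : 0 < g := by omega
  have hk0 : 0 < k := by omega
  have hgr : (3:ℝ) ≤ g := by exact_mod_cast hg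
  have hkr : (2:ℝ) ≤ k := by exact_mod_cast hk
  have hgr0 : (0:ℝ) < g := by linarith
  have hkr0 : (0:ℝ) < k := by linarith
  have hgk0 : (0:ℝ) < (g:ℝ)*k := by positivity
  set m : ℕ := g*ℓ % k with hm
  set q : ℕ := g*ℓ / k with hq
  have hmk : m < k := Nat.mod_lt _ hk0
  have hdiv : g*ℓ = k*q + m := (Nat.div_add_mod (g*ℓ) k).symm
  set M : ℝ := min ((m:ℕ):ℝ) ((k:ℝ) - (m:ℕ)) with hM
  have hM0 : 0 ≤ M := le_min (by positivity) (by
    have : (m:ℝ) < k := by exact_mod_cast hmk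
    linarith)
  have hMm : M ≤ (m:ℝ) := min_le_left _ _
  have hMkm : M ≤ (k:ℝ) - m := min_le_right _ _
  have hMhalf : M ≤ (k:ℝ)/2 := by linarith
  have hangle0 : 0 ≤ 2*π*M/((g:ℝ)*k) := by positivity
  have hangle2 : 2*π*M/((g:ℝ)*k) ≤ π/2 := by
    rw [div_le_iff₀ hgk0]
    nlinarith [mul_le_mul_of_nonneg_left hMhalf pi_pos.le,
      mul_le_mul_of_nonneg_left hgr (mul_nonneg pi_pos.le hkr0.le), pi_pos, hkr0]
  have hcos0 : 0 ≤ Real.cos (2*π*M/((g:ℝ)*k)) :=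
    Real.cos_nonneg_of_mem_Icc ⟨by linarith, hangle2⟩
  -- cast facts
  have e1 : (g:ℝ)*ℓ = (k:ℝ)*q + m := by exact_mod_cast hdiv
  apply IsGreatest.csSup_eq
  constructor
  · -- membership
    rcases le_total ((m:ℕ):ℝ) ((k:ℝ) - m) with hc | hc
    · -- M = m, witness j = q % g
      have hMe : M = (m:ℝ) := min_eq_left hc
      refine ⟨Complex.exp (((2*π*(q % g : ℕ)/g : ℝ):ℂ) * I), Or.inl (my_exp_pow g _ hg0), ?_⟩
      rw [my_prod_re _ k ℓ hk0]
      have e2 : (q:ℝ) = (g:ℝ)*((q/g : ℕ):ℝ) + ((q % g : ℕ):ℝ) := by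
        exact_mod_cast (Nat.div_add_mod q g).symm
      have hgne : (g:ℝ) ≠ 0 := ne_of_gt hgr0
      have hkne : (k:ℝ) ≠ 0 := ne_of_gt hkr0
      have e2k : (k:ℝ)*(q:ℝ) = (k:ℝ)*((g:ℝ)*((q/g : ℕ):ℝ) + ((q % g : ℕ):ℝ)) := by rw [← e2]
      have hnum : (k:ℝ)*((q % g : ℕ):ℝ) - (g:ℝ)*ℓ = -(m:ℝ) - (g:ℝ)*k*((q/g : ℕ):ℝ) := by
        linarith [e1, e2k]
      have key1 : 2*π*((q % g : ℕ):ℝ)/g - 2*π*ℓ/k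
          = -(2*π*(m:ℝ)/((g:ℝ)*k)) + ((-((q/g : ℕ):ℤ) : ℤ):ℝ) * (2*π) := by
        rw [show ((-((q/g : ℕ):ℤ) : ℤ):ℝ) = -(((q/g : ℕ)):ℝ) from by rw [Int.cast_neg, Int.cast_natCast]]
        have h1 : 2*π*((q % g : ℕ):ℝ)/g - 2*π*(ℓ:ℝ)/k
            = 2*π*((k:ℝ)*((q % g : ℕ):ℝ) - (g:ℝ)*ℓ)/((g:ℝ)*k) := by field_simp
        have h2 : -(2*π*(m:ℝ)/((g:ℝ)*k)) + (-(((q/g : ℕ)):ℝ))*(2*π)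
            = 2*π*(-(m:ℝ) - (g:ℝ)*k*((q/g : ℕ):ℝ))/((g:ℝ)*k) := by field_simp; ring
        rw [h1, h2, hnum]
      rw [key1, Real.cos_add_int_mul_two_pi, Real.cos_neg, hMe]
    · -- M = k - m, witness j = (q+1) % g
      have hMe : M = (k:ℝ) - m := min_eq_right hc
      refine ⟨Complex.exp (((2*π*((q+1) % g : ℕ)/g : ℝ):ℂ) * I), Or.inl (my_exp_pow g _ hg0), ?_⟩
      rw [my_prod_re _ k ℓ hk0]
      have e3 : ((q:ℝ)+1) = (g:ℝ)*(((q+1)/g : ℕ):ℝ) + (((q+1) % g : ℕ):ℝ) := by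
        exact_mod_cast (Nat.div_add_mod (q+1) g).symm
      have hgne : (g:ℝ) ≠ 0 := ne_of_gt hgr0
      have hkne : (k:ℝ) ≠ 0 := ne_of_gt hkr0
      have e3k : (k:ℝ)*((q:ℝ)+1) = (k:ℝ)*((g:ℝ)*(((q+1)/g : ℕ):ℝ) + (((q+1) % g : ℕ):ℝ)) := by
        rw [← e3]
      have hnum : (k:ℝ)*(((q+1) % g : ℕ):ℝ) - (g:ℝ)*ℓ
          = ((k:ℝ) - (m:ℝ)) - (g:ℝ)*k*(((q+1)/g : ℕ):ℝ) := by
        linarith [e1, e3k]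
      have key2 : 2*π*(((q+1) % g : ℕ):ℝ)/g - 2*π*ℓ/k
          = 2*π*((k:ℝ)-(m:ℝ))/((g:ℝ)*k) + ((-(((q+1)/g : ℕ):ℤ) : ℤ):ℝ) * (2*π) := by
        rw [show ((-(((q+1)/g : ℕ):ℤ) : ℤ):ℝ) = -((((q+1)/g : ℕ)):ℝ) from by rw [Int.cast_neg, Int.cast_natCast]]
        have h1 : 2*π*(((q+1) % g : ℕ):ℝ)/g - 2*π*(ℓ:ℝ)/k
            = 2*π*((k:ℝ)*(((q+1) % g : ℕ):ℝ) - (g:ℝ)*ℓ)/((g:ℝ)*k) := by field_simp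
        have h2 : 2*π*((k:ℝ)-(m:ℝ))/((g:ℝ)*k) + (-((((q+1)/g : ℕ)):ℝ))*(2*π)
            = 2*π*(((k:ℝ) - (m:ℝ)) - (g:ℝ)*k*(((q+1)/g : ℕ):ℝ))/((g:ℝ)*k) := by field_simp; ring
        rw [h1, h2, hnum]
      rw [key2, Real.cos_add_int_mul_two_pi, hMe]
  · -- upper bound
    rintro r ⟨z, hz | hz0, hr⟩
    · haveI : NeZero g := ⟨by omega⟩
      obtain ⟨j, hj, hzj⟩ := (Complex.isPrimitiveRoot_exp g (by omega)).eq_pow_of_pow_eq_one hz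
      have hzj' : z = Complex.exp (((2*π*(j:ℕ)/g : ℝ):ℂ) * I) := by
        rw [← hzj, ← Complex.exp_nat_mul]
        congr 1
        have hgc : (g:ℂ) ≠ 0 := Nat.cast_ne_zero.mpr (by omega)
        push_cast
        field_simp
      rw [hzj', my_prod_re _ k ℓ hk0] at hr
      set A : ℤ := (j:ℤ)*k - (g:ℤ)*ℓ with hA
      have hAang : 2*π*(j:ℝ)/g - 2*π*(ℓ:ℝ)/k = 2*π*(A:ℝ)/((g:ℝ)*k) := by
        rw [hA]
        push_cast
        field_simp
      set t : ℤ := round ((A:ℝ)/((g:ℝ)*k)) with ht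
      set ρ : ℤ := A - ((g:ℤ)*k)*t with hρ
      have hρr : (ρ:ℝ) = ((g:ℝ)*k) * ((A:ℝ)/((g:ℝ)*k) - t) := by
        rw [hρ]
        push_cast
        field_simp
      have habs : |(ρ:ℝ)| ≤ (g:ℝ)*k/2 := by
        rw [hρr, abs_mul, abs_of_pos hgk0]
        have h12 := abs_sub_round ((A:ℝ)/((g:ℝ)*k))
        nlinarith [mul_le_mul_of_nonneg_left h12 hgk0.le]
      have hcosA : Real.cos (2*π*(A:ℝ)/((g:ℝ)*k)) = Real.cos (2*π*(ρ:ℝ)/((g:ℝ)*k)) := by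
        have : 2*π*(A:ℝ)/((g:ℝ)*k) = 2*π*(ρ:ℝ)/((g:ℝ)*k) + (t:ℝ)*(2*π) := by
          rw [hρ]
          push_cast
          field_simp
          ring
        rw [this, Real.cos_add_int_mul_two_pi]
      have hcosρ : Real.cos (2*π*(ρ:ℝ)/((g:ℝ)*k)) = Real.cos (2*π*|(ρ:ℝ)|/((g:ℝ)*k)) := by
        rcases abs_cases ((ρ:ℝ)) with ⟨h1, _⟩ | ⟨h1, _⟩
        · rw [h1]
        · rw [h1, show 2*π*(-(ρ:ℝ))/((g:ℝ)*k) = -(2*π*(ρ:ℝ)/((g:ℝ)*k)) by ring, Real.cos_neg]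
      -- integer congruence: ρ = k*s - m
      have e1z : (g:ℤ)*ℓ = (k:ℤ)*q + m := by exact_mod_cast hdiv
      set s : ℤ := (j:ℤ) - q - g*t with hs
      have hρs : ρ = (k:ℤ)*s - m := by
        rw [hρ, hA, hs]
        linear_combination (-1 : ℤ) * e1z
      have hMρ : M ≤ |(ρ:ℝ)| := by
        have hmr : ((m:ℕ):ℝ) = ((m:ℤ):ℝ) := by push_cast; ring
        rcases le_or_gt s 0 with hs0 | hs0
        · have hks : (k:ℤ)*s ≤ 0 := mul_nonpos_of_nonneg_of_nonpos (by positivity) hs0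
          have : (ρ:ℤ) ≤ -(m:ℤ) := by rw [hρs]; linarith
          have hρle : (ρ:ℝ) ≤ -(m:ℝ) := by exact_mod_cast this
          calc M ≤ (m:ℝ) := hMm
            _ ≤ -(ρ:ℝ) := by linarith
            _ ≤ |(ρ:ℝ)| := neg_le_abs _
        · have hks : (k:ℤ) ≤ (k:ℤ)*s := le_mul_of_one_le_right (by positivity) hs0
          have : (k:ℤ) - m ≤ (ρ:ℤ) := by rw [hρs]; linarith
          have hρge : (k:ℝ) - (m:ℝ) ≤ (ρ:ℝ) := by exact_mod_cast this
          calc M ≤ (k:ℝ) - m := hMkm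
            _ ≤ (ρ:ℝ) := hρge
            _ ≤ |(ρ:ℝ)| := le_abs_self _
      have hπbd : 2*π*|(ρ:ℝ)|/((g:ℝ)*k) ≤ π := by
        rw [div_le_iff₀ hgk0]
        linarith [mul_le_mul_of_nonneg_left habs (by positivity : (0:ℝ) ≤ 2*π)]
      have hmono : Real.cos (2*π*|(ρ:ℝ)|/((g:ℝ)*k)) ≤ Real.cos (2*π*M/((g:ℝ)*k)) := by
        apply Real.cos_le_cos_of_nonneg_of_le_pi hangle0 hπbd
        rw [div_le_div_iff₀ hgk0 hgk0]
        linarith [mul_le_mul_of_nonneg_right (mul_le_mul_of_nonneg_left hMρ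
          (by positivity : (0:ℝ) ≤ 2*π)) hgk0.le]
      calc r = Real.cos (2*π*(A:ℝ)/((g:ℝ)*k)) := by rw [hr, ← hAang]
        _ = Real.cos (2*π*|(ρ:ℝ)|/((g:ℝ)*k)) := by rw [hcosA, hcosρ]
        _ ≤ Real.cos (2*π*M/((g:ℝ)*k)) := hmono
    · rw [hz0, zero_mul] at hr
      simpa [hr] using hcos0

lemma my_min_scale (d x K : ℝ) (hd : 0 < d) : min (d*x) (d*K - d*x) = d * min x (K - x) := by
  rcases le_total x (K - x) with h | h
  · rw [min_eq_left h, min_eq_left (by nlinarith)]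
  · rw [min_eq_right h, min_eq_right (by nlinarith)]; ring


set_option maxHeartbeats 2000000 in
/-- For odd `g ≥ 3`, even `k ≥ 2`, `k* = k/gcd(k,g)` and `δ_g = 1 − (g/π)sin(π/g)`:
`(1/k)·Σ_{ℓ mod k} max_{z ∈ μ_g ∪ {0}} Re(z·e(−ℓ/k))
  = (1 − δ_g)·(π/(gk*))/tan(π/(gk*))`. -/
theorem stmt_11 (g k : ℕ) (hg : 3 ≤ g) (hgodd : Odd g) (hk : 2 ≤ k) (hkeven : Even k) :
    (1 / k : ℝ) * ∑ ℓ ∈ Finset.range k,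
        sSup {r : ℝ | ∃ z : ℂ, (z ^ g = 1 ∨ z = 0) ∧
          r = (z * Complex.exp (2 * π * I * (-(ℓ : ℂ) / k))).re}
      = (1 - (1 - (g / π) * Real.sin (π / g))) *
        (π / (g * (k / Nat.gcd k g : ℕ))) / Real.tan (π / (g * (k / Nat.gcd k g : ℕ))) := by
  have hg0 : 0 < g := by omega
  have hk0 : 0 < k := by omega
  set d := Nat.gcd k g with hd
  have hdk : d ∣ k := Nat.gcd_dvd_left k g
  have hdg : d ∣ g := Nat.gcd_dvd_right k g
  have hd0 : 0 < d := Nat.gcd_pos_of_pos_left _ hk0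
  set k' := k / d with hk'
  set g' := g / d with hg'
  have hkk : k = d * k' := (Nat.mul_div_cancel' hdk).symm
  have hgg : g = d * g' := (Nat.mul_div_cancel' hdg).symm
  have hcop : Nat.Coprime g' k' := (Nat.coprime_div_gcd_div_gcd hd0).symm
  have hdodd : Odd d := by
    rcases Nat.even_or_odd d with he | ho
    · exfalso
      have : 2 ∣ g := dvd_trans he.two_dvd hdg
      rw [Nat.odd_iff] at hgodd
      omega
    · exact ho
  have hk'even : Even k' := by
    rcases Nat.even_or_odd k' with he | ho
    · exact he
    · exfalso
      have := hdodd.mul ho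
      rw [← hkk] at this
      exact (Nat.not_even_iff_odd.mpr this) hkeven
  have hk'0 : 0 < k' := Nat.div_pos (Nat.le_of_dvd hk0 hdk) hd0
  have hk'2 : 2 ≤ k' := by
    rcases hk'even with ⟨t, ht⟩; omega
  obtain ⟨n, hn2, hn1⟩ : ∃ n, k' = 2*n ∧ 1 ≤ n := by
    rcases hk'even with ⟨t, ht⟩; exact ⟨t, by omega, by omega⟩
  -- real casts
  have hgr : (3:ℝ) ≤ g := by exact_mod_cast hg
  have hgr0 : (0:ℝ) < g := by linarith
  have hkr0 : (0:ℝ) < k := by exact_mod_cast hk0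
  have hdr0 : (0:ℝ) < d := by exact_mod_cast hd0
  have hk'r0 : (0:ℝ) < k' := by exact_mod_cast hk'0
  have hk'r2 : (2:ℝ) ≤ k' := by exact_mod_cast hk'2
  have hkkr : (k:ℝ) = (d:ℝ)*k' := by exact_mod_cast hkk
  -- Step 1: evaluate each sSup
  have s1 : ∑ ℓ ∈ Finset.range k,
      sSup {r : ℝ | ∃ z : ℂ, (z ^ g = 1 ∨ z = 0) ∧
        r = (z * Complex.exp (2 * π * I * (-(ℓ : ℂ) / k))).re}
      = ∑ ℓ ∈ Finset.range k,
        Real.cos (2*π*(min ((g*ℓ % k : ℕ):ℝ) ((k:ℝ) - (g*ℓ % k : ℕ)))/((g:ℝ)*k)) :=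
    Finset.sum_congr rfl (fun ℓ _ => my_sSup_eval g k hg hk ℓ)
  -- Step 2: mod structure
  have s2 : ∀ ℓ : ℕ, g*ℓ % k = d * (g' * (ℓ % k') % k') := by
    intro ℓ
    conv_lhs => rw [hgg, hkk]
    rw [mul_assoc, Nat.mul_mod_mul_left]
    congr 1
    conv_lhs => rw [Nat.mul_mod]
    conv_rhs => rw [Nat.mul_mod]
    rw [Nat.mod_mod_of_dvd ℓ dvd_rfl]
  set F : ℕ → ℝ := fun m => Real.cos (2*π*(min ((m:ℕ):ℝ) ((k:ℝ) - (m:ℕ)))/((g:ℝ)*k)) with hF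
  have s3 : ∑ ℓ ∈ Finset.range k, F (g*ℓ % k)
      = ∑ ℓ ∈ Finset.range (d*k'), F (d * (g' * (ℓ % k') % k')) := by
    rw [show Finset.range k = Finset.range (d*k') from by rw [← hkk]]
    exact Finset.sum_congr rfl (fun ℓ _ => by rw [s2 ℓ])
  have s4 : ∑ ℓ ∈ Finset.range (d*k'), F (d * (g' * (ℓ % k') % k'))
      = (d:ℝ) * ∑ x ∈ Finset.range k', F (d * (g' * x % k')) :=
    my_sum_mod_range d k' hk'0 (fun x => F (d * (g' * x % k')))
  have s5 : ∑ x ∈ Finset.range k', F (d * (g' * x % k'))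
      = ∑ x ∈ Finset.range k', F (d * x) :=
    my_sum_mul_mod k' g' hk'2 hcop (fun y => F (d * y))
  have s6 : ∀ x, F (d * x)
      = Real.cos (2*π*(min ((x:ℕ):ℝ) ((k':ℝ) - (x:ℕ)))/((g:ℝ)*k')) := by
    intro x
    rw [hF]
    have h1 : ((d*x : ℕ):ℝ) = (d:ℝ)*x := by push_cast; ring
    have h2 : min ((d:ℝ)*x) ((d:ℝ)*(k':ℝ) - (d:ℝ)*x) = (d:ℝ) * min ((x:ℕ):ℝ) ((k':ℝ) - (x:ℕ)) :=
      my_min_scale (d:ℝ) (x:ℝ) (k':ℝ) hdr0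
    simp only [h1, hkkr, h2]
    rw [show ((g:ℝ))*((d:ℝ)*k') = (d:ℝ)*((g:ℝ)*k') from by ring,
      show 2*π*((d:ℝ)*(min ((x:ℕ):ℝ) ((k':ℝ) - (x:ℕ)))) = (d:ℝ)*(2*π*(min ((x:ℕ):ℝ) ((k':ℝ) - (x:ℕ)))) from by ring,
      mul_div_mul_left _ _ (ne_of_gt hdr0)]
  have s7 : ∑ x ∈ Finset.range k',
      Real.cos (2*π*(min ((x:ℕ):ℝ) ((k':ℝ) - (x:ℕ)))/((g:ℝ)*k'))
      = Real.sin (π/g) * Real.cos (π/((g:ℝ)*k')) / Real.sin (π/((g:ℝ)*k')) := by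
    have hcast : (k':ℝ) = 2*(n:ℝ) := by rw [hn2]; push_cast; ring
    calc ∑ x ∈ Finset.range k',
        Real.cos (2*π*(min ((x:ℕ):ℝ) ((k':ℝ) - (x:ℕ)))/((g:ℝ)*k'))
        = ∑ x ∈ Finset.range (2*n),
          Real.cos (2*π*(min ((x:ℕ):ℝ) (2*(n:ℝ) - (x:ℕ)))/((g:ℝ)*(2*(n:ℝ)))) := by
          rw [hn2]
          apply Finset.sum_congr rfl
          intro x _
          push_cast
          ring_nf
      _ = Real.sin (π/g) * Real.cos (π/((g:ℝ)*(2*(n:ℝ)))) / Real.sin (π/((g:ℝ)*(2*(n:ℝ)))) :=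
          my_T_eval g n hg hn1
      _ = Real.sin (π/g) * Real.cos (π/((g:ℝ)*k')) / Real.sin (π/((g:ℝ)*k')) := by rw [hcast]
  rw [s1]
  have : ∑ ℓ ∈ Finset.range k,
      Real.cos (2*π*(min ((g*ℓ % k : ℕ):ℝ) ((k:ℝ) - (g*ℓ % k : ℕ)))/((g:ℝ)*k))
      = ∑ ℓ ∈ Finset.range k, F (g*ℓ % k) := rfl
  rw [this, s3, s4, s5, Finset.sum_congr rfl (fun x _ => s6 x), s7]
  -- final algebra
  have hgk'0 : (0:ℝ) < (g:ℝ)*k' := by positivity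
  have hx1 : 0 < π/((g:ℝ)*k') := by positivity
  have hx2 : π/((g:ℝ)*k') ≤ π/6 := by
    apply div_le_div_of_nonneg_left pi_pos.le (by norm_num)
    nlinarith
  have hsin : 0 < Real.sin (π/((g:ℝ)*k')) :=
    Real.sin_pos_of_pos_of_lt_pi hx1 (by nlinarith [pi_pos])
  have hcos : 0 < Real.cos (π/((g:ℝ)*k')) := by
    apply Real.cos_pos_of_mem_Ioo
    constructor
    · nlinarith [pi_pos]
    · nlinarith [pi_pos]
  rw [Real.tan_eq_sin_div_cos, hkkr]
  have hπ : (π:ℝ) ≠ 0 := ne_of_gt pi_pos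
  field_simp
  ring
end
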